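/- arXiv:2207.04531 — 5 statements merged into one kernel-verified Lean document; each statement's English description precedes it below -/
import Mathlib

section
/- For all s, t ∈ ℂ⁸ one has the identity (t̄t)·s − (t̄s)·t = (1/6)·Σ_{μ,ν=1}^{7}(s̄Γ_{μν}t)·Γ_{μν}t in ℂ⁸. (This is the identity (t̄t)s − (t̄s)t = (1/3)·ω^{(2)}(s,t)·t, where ω^{(2)}(s,t) = (1/2)Σ_{μ,ν}(s̄Γ^{μν}t)Γ_{μν} is the bivector-valued bilinear acting on t by Clifford multiplication; it encodes the odd–odd–odd Jacobi identity of F(4) in its odd contact grading.) -/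
/-!
Put `Y = t (Ct)ᵀ` and `Φ X = ∑ μ, Γ_μ X Γ_μ`. Since `Γ_{μν}` is `C`-antisymmetric,
`(s̄ Γ_{μν} t) Γ_{μν} t = -Γ_{μν} Y Γ_{μν} s`, and the Clifford relations give
`∑ μ ν, Γ_{μν} X Γ_{μν} = 7 X - Φ (Φ X)`.

The products `Γ_A` over the sets `A` with `|A| ≤ 3` form a basis of the `8 × 8` matrices: they are
trace-orthogonal, because for `A ≠ B` conjugation by some `Γ_i` acts on `Γ_A` and `Γ_B` with
opposite signs. `Φ` acts on `Γ_A` by `(-1)^|A| (2|A| - 7)`, and `Γ_Aᵀ C = ±C Γ_A` with sign `-1`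
exactly for `|A| = 1, 2`. So the `C`-symmetric matrix `Y` only has components on `Γ_∅ = 1`, where
`Φ` is `-7 = 1 - tr 1`, and on the traceless `Γ_A` with `|A| = 3`, where `Φ` is `1`. Hence
`Φ Y = Y - (tr Y) 1`, `∑ Γ_{μν} Y Γ_{μν} = 6 (Y - (tr Y) 1)`, and the identity follows from
`Y s = (t̄s) t` and `tr Y = t̄t`.
-/

open Matrix

noncomputable section

/-- The antisymmetrized product `Γ_{μν} = (1/2)(Γ_μΓ_ν − Γ_νΓ_μ)`. -/
def gamma2 (Γ : Fin 7 → Matrix (Fin 8) (Fin 8) ℂ) (μ ν : Fin 7) :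
    Matrix (Fin 8) (Fin 8) ℂ :=
  (2 : ℂ)⁻¹ • (Γ μ * Γ ν - Γ ν * Γ μ)

lemma Finset.exists_odd_add_ite_of_ne {α : Type*} [Fintype α] [DecidableEq α]
    {s t : Finset α} (hst : s ≠ t) (hcard : s.card + t.card < Fintype.card α) :
    ∃ i, Odd (s.card + (if i ∈ s then 1 else 0) + (t.card + if i ∈ t then 1 else 0)) := by
  by_contra! h
  simp only [Nat.not_odd_iff_even, Nat.even_iff] at h
  rcases Nat.even_or_odd (s.card + t.card) with heven | hodd
  · rw [Nat.even_iff] at heven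
    refine hst (Finset.ext fun i => ?_)
    have := h i
    by_cases hs : i ∈ s <;> by_cases ht : i ∈ t <;>
      simp only [hs, ht, if_true, if_false] at this ⊢ <;> omega
  · rw [Nat.odd_iff] at hodd
    have hcompl : t = sᶜ := Finset.ext fun i => by
      have := h i
      rw [Finset.mem_compl]
      by_cases hs : i ∈ s <;> by_cases ht : i ∈ t <;>
        simp only [hs, ht, if_true, if_false, not_true_eq_false, not_false_eq_true] at this ⊢ <;>
        omega
    have := Finset.card_le_univ s
    rw [hcompl, Finset.card_compl] at hcard
    omega

lemma Finset.count_sort {α : Type*} [LinearOrder α] (s : Finset α) (a : α) :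
    s.sort.count a = if a ∈ s then 1 else 0 := by
  split_ifs with ha
  · exact List.count_eq_one_of_mem (Finset.sort_nodup s _) ((Finset.mem_sort _).mpr ha)
  · exact List.count_eq_zero_of_not_mem (by simpa using ha)

namespace GammaMatrices

section Clifford

variable {A : Type*} [Ring A] {n : ℕ} {e : Fin n → A}

def gammaProd (e : Fin n → A) (l : List (Fin n)) : A := (l.map e).prod

@[simp] lemma gammaProd_nil : gammaProd e [] = 1 := rfl

@[simp] lemma gammaProd_cons (i : Fin n) (l : List (Fin n)) :
    gammaProd e (i :: l) = e i * gammaProd e l := List.prod_cons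

@[simp] lemma gammaProd_append (l l' : List (Fin n)) :
    gammaProd e (l ++ l') = gammaProd e l * gammaProd e l' := by
  simp [gammaProd]

lemma gammaProd_mul_gammaProd_reverse (hsq : ∀ i, e i * e i = -1) (l : List (Fin n)) :
    gammaProd e l * gammaProd e l.reverse = (-1 : ℤ) ^ l.length • (1 : A) := by
  induction l with
  | nil => simp
  | cons a l ih =>
    calc gammaProd e (a :: l) * gammaProd e (a :: l).reverse
        = e a * (gammaProd e l * gammaProd e l.reverse) * e a := by simp [mul_assoc]
      _ = (-1 : ℤ) ^ (a :: l).length • (1 : A) := by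
        rw [ih, mul_smul_comm, smul_mul_assoc, mul_one, hsq, List.length_cons, pow_succ,
          mul_neg_one, neg_smul, smul_neg]

lemma gammaProd_mul_eq_smul_mul (hanti : ∀ i j, i ≠ j → e i * e j = -(e j * e i))
    (l : List (Fin n)) (i : Fin n) :
    gammaProd e l * e i = (-1 : ℤ) ^ (l.length + l.count i) • (e i * gammaProd e l) := by
  induction l with
  | nil => simp
  | cons a l ih =>
    rw [gammaProd_cons, mul_assoc, ih, mul_smul_comm, ← mul_assoc, List.length_cons,
      List.count_cons]
    by_cases hai : a = i
    · subst hai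
      simp [pow_add, mul_assoc]
    · rw [hanti a i hai, beq_false_of_ne hai, if_neg Bool.false_ne_true, add_zero,
        add_right_comm, pow_succ, mul_neg_one, neg_smul, neg_mul, smul_neg, mul_assoc]

lemma mul_gammaProd_mul (hsq : ∀ i, e i * e i = -1)
    (hanti : ∀ i j, i ≠ j → e i * e j = -(e j * e i)) (l : List (Fin n)) (i : Fin n) :
    e i * gammaProd e l * e i = (-1 : ℤ) ^ (l.length + l.count i + 1) • gammaProd e l := by
  rw [mul_assoc, gammaProd_mul_eq_smul_mul hanti, mul_smul_comm, ← mul_assoc, hsq, pow_succ]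
  simp

def gammaSet (e : Fin n → A) (s : Finset (Fin n)) : A := gammaProd e s.sort

lemma gammaSet_empty : gammaSet e ∅ = 1 := by simp [gammaSet]

lemma sum_mul_gammaSet_mul (hsq : ∀ i, e i * e i = -1)
    (hanti : ∀ i j, i ≠ j → e i * e j = -(e j * e i)) (s : Finset (Fin n)) :
    ∑ i, e i * gammaSet e s * e i = ((-1 : ℤ) ^ s.card * (2 * s.card - n)) • gammaSet e s := by
  simp_rw [gammaSet, mul_gammaProd_mul hsq hanti, ← Finset.sum_smul, Finset.length_sort,
    Finset.count_sort]
  congr 1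
  have hsign : ∀ i, (-1 : ℤ) ^ (s.card + (if i ∈ s then 1 else 0) + 1)
      = (-1) ^ s.card * (2 * (if i ∈ s then 1 else 0) - 1) := fun i => by
    split_ifs <;> ring
  simp_rw [hsign, ← Finset.mul_sum, Finset.sum_sub_distrib, ← Finset.mul_sum]
  simp

end Clifford

section CommRing

variable {R : Type*} [CommRing R] {m : Type*} [Fintype m] {n : ℕ}

def conjSum (Γ : Fin n → Matrix m m R) : Matrix m m R →ₗ[R] Matrix m m R :=
  ∑ μ, LinearMap.mulLeft R (Γ μ) ∘ₗ LinearMap.mulRight R (Γ μ)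

lemma conjSum_apply (Γ : Fin n → Matrix m m R) (X : Matrix m m R) :
    conjSum Γ X = ∑ μ, Γ μ * X * Γ μ := by
  simp [conjSum, mul_assoc]

lemma gammaProd_transpose_mul [DecidableEq m] {Γ : Fin n → Matrix m m R}
    (hanti : ∀ i j, i ≠ j → Γ i * Γ j = -(Γ j * Γ i)) {C : Matrix m m R}
    (hCΓ : ∀ i, (Γ i)ᵀ * C = -(C * Γ i)) {l : List (Fin n)} (hl : l.Nodup) :
    (gammaProd Γ l)ᵀ * C = (-1 : ℤ) ^ ((l.length + 1).choose 2) • (C * gammaProd Γ l) := by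
  induction l with
  | nil => simp
  | cons a l ih =>
    obtain ⟨hal, hl⟩ := List.nodup_cons.mp hl
    calc (gammaProd Γ (a :: l))ᵀ * C = -((gammaProd Γ l)ᵀ * C * Γ a) := by
          rw [gammaProd_cons, transpose_mul, mul_assoc, hCΓ, mul_neg, mul_assoc]
      _ = -((-1 : ℤ) ^ ((l.length + 1).choose 2) * (-1) ^ l.length) •
            (C * (Γ a * gammaProd Γ l)) := by
          rw [ih hl, smul_mul_assoc, mul_assoc, gammaProd_mul_eq_smul_mul hanti,
            List.count_eq_zero_of_not_mem hal, add_zero, mul_smul_comm, smul_smul, neg_smul]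
      _ = (-1 : ℤ) ^ (((a :: l).length + 1).choose 2) • (C * gammaProd Γ (a :: l)) := by
          rw [gammaProd_cons, List.length_cons, Nat.choose_succ_succ' (l.length + 1),
            Nat.choose_one_right, pow_add, pow_succ]
          ring_nf

lemma conjSum_gammaSet {Γ : Fin n → Matrix m m R} [DecidableEq m]
    (hsq : ∀ i, Γ i * Γ i = -1)
    (hanti : ∀ i j, i ≠ j → Γ i * Γ j = -(Γ j * Γ i)) (s : Finset (Fin n)) :
    conjSum Γ (gammaSet Γ s) = ((-1 : ℤ) ^ s.card * (2 * s.card - n)) • gammaSet Γ s := by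
  rw [conjSum_apply, sum_mul_gammaSet_mul hsq hanti]

lemma dotProduct_mulVec_smul_mulVec {C M : Matrix m m R} (hM : Mᵀ * C = -(C * M))
    (s t : m → R) :
    (s ⬝ᵥ C *ᵥ (M *ᵥ t)) • (M *ᵥ t) = -((M * vecMulVec t (C *ᵥ t) * M) *ᵥ s) := by
  rw [mul_vecMulVec, vecMulVec_mul, vecMulVec_mulVec, ← mulVec_transpose, mulVec_mulVec,
    mulVec_mulVec, hM, dotProduct_comm]
  simp [neg_mulVec]

lemma transpose_vecMulVec_mul {C : Matrix m m R} (hC : Cᵀ = C) (t : m → R) :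
    (vecMulVec t (C *ᵥ t))ᵀ * C = C * vecMulVec t (C *ᵥ t) := by
  rw [transpose_vecMulVec, vecMulVec_mul, mul_vecMulVec, ← mulVec_transpose, hC]

lemma vecMulVec_mulVec_of_transpose_eq {C : Matrix m m R} (hC : Cᵀ = C) (s t : m → R) :
    vecMulVec t (C *ᵥ t) *ᵥ s = (t ⬝ᵥ C *ᵥ s) • t := by
  rw [vecMulVec_mulVec, dotProduct_mulVec, ← mulVec_transpose, hC]
  simp

end CommRing

section Field

variable {K : Type*} [Field K] [CharZero K] {m : Type*} [Fintype m] [DecidableEq m] {n : ℕ}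
  {Γ : Fin n → Matrix m m K}

lemma trace_eq_zero_of_mul_mul_eq_self {X Z : Matrix m m K} (hX : X * X = -1)
    (hZ : X * Z * X = Z) : Z.trace = 0 := by
  have : Z.trace = -Z.trace := by
    conv_lhs => rw [← hZ]
    rw [mul_assoc, trace_mul_comm, mul_assoc, hX, mul_neg_one, trace_neg]
  exact CharZero.eq_neg_self_iff.mp this

lemma trace_gammaProd_mul_gammaProd_eq_zero (hsq : ∀ i, Γ i * Γ i = -1)
    (hanti : ∀ i j, i ≠ j → Γ i * Γ j = -(Γ j * Γ i)) {l l' : List (Fin n)} (i : Fin n)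
    (hodd : Odd (l.length + l.count i + (l'.length + l'.count i))) :
    (gammaProd Γ l * gammaProd Γ l').trace = 0 := by
  refine trace_eq_zero_of_mul_mul_eq_self (hsq i) ?_
  calc Γ i * (gammaProd Γ l * gammaProd Γ l') * Γ i
      = -(Γ i * gammaProd Γ l * (Γ i * Γ i) * gammaProd Γ l' * Γ i) := by
        rw [hsq]; noncomm_ring
    _ = -((Γ i * gammaProd Γ l * Γ i) * (Γ i * gammaProd Γ l' * Γ i)) := by noncomm_ring
    _ = gammaProd Γ l * gammaProd Γ l' := by
        rw [mul_gammaProd_mul hsq hanti, mul_gammaProd_mul hsq hanti, smul_mul_smul_comm,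
          ← pow_add, show l.length + l.count i + 1 + (l'.length + l'.count i + 1)
            = l.length + l.count i + (l'.length + l'.count i) + 2 by ring,
          pow_add, hodd.neg_one_pow]
        simp

lemma trace_gammaSet_mul_gammaProd_reverse_eq_zero (hsq : ∀ i, Γ i * Γ i = -1)
    (hanti : ∀ i j, i ≠ j → Γ i * Γ j = -(Γ j * Γ i)) {s t : Finset (Fin n)} (hst : s ≠ t)
    (hcard : s.card + t.card < n) :
    (gammaSet Γ s * gammaProd Γ t.sort.reverse).trace = 0 := by
  obtain ⟨i, hi⟩ := Finset.exists_odd_add_ite_of_ne hst (by simpa using hcard)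
  refine trace_gammaProd_mul_gammaProd_eq_zero hsq hanti i ?_
  simpa [Finset.length_sort, Finset.count_sort] using hi

lemma trace_gammaSet_eq_zero (hsq : ∀ i, Γ i * Γ i = -1)
    (hanti : ∀ i j, i ≠ j → Γ i * Γ j = -(Γ j * Γ i)) {s : Finset (Fin n)} (hs : s ≠ ∅)
    (hcard : s.card < n) : (gammaSet Γ s).trace = 0 := by
  simpa using trace_gammaSet_mul_gammaProd_reverse_eq_zero hsq hanti hs (by simpa using hcard)

lemma linearIndependent_gammaSet [Nonempty m] (hsq : ∀ i, Γ i * Γ i = -1)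
    (hanti : ∀ i j, i ≠ j → Γ i * Γ j = -(Γ j * Γ i)) :
    LinearIndependent K (fun s : {s : Finset (Fin n) // 2 * s.card < n} => gammaSet Γ s) := by
  rw [Fintype.linearIndependent_iff]
  intro c hc t
  have htrace := congrArg (fun X => (X * gammaProd Γ t.1.sort.reverse).trace) hc
  simp only [Finset.sum_mul, smul_mul_assoc, trace_sum, trace_smul, zero_mul, trace_zero] at htrace
  rw [Finset.sum_eq_single t (fun s _ hst => by
      rw [trace_gammaSet_mul_gammaProd_reverse_eq_zero hsq hanti (Subtype.coe_ne_coe.mpr hst)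
        (by omega), smul_zero]) (by simp)] at htrace
  rw [gammaSet, gammaProd_mul_gammaProd_reverse hsq, trace_smul, trace_one] at htrace
  simpa [Finset.length_sort] using htrace

lemma coeff_eq_zero_of_transpose_mul_eq_mul [Nonempty m] (hsq : ∀ i, Γ i * Γ i = -1)
    (hanti : ∀ i j, i ≠ j → Γ i * Γ j = -(Γ j * Γ i)) {C : Matrix m m K} (hC : IsUnit C)
    (hCΓ : ∀ i, (Γ i)ᵀ * C = -(C * Γ i)) {c : {s : Finset (Fin n) // 2 * s.card < n} → K}
    (hY : (∑ s, c s • gammaSet Γ s)ᵀ * C = C * ∑ s, c s • gammaSet Γ s)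
    {s : {s : Finset (Fin n) // 2 * s.card < n}} (hs : Odd ((s.1.card + 1).choose 2)) :
    c s = 0 := by
  set σ : {s : Finset (Fin n) // 2 * s.card < n} → K :=
    fun s => ((-1 : ℤ) ^ ((s.1.card + 1).choose 2) : ℤ)
  have hsum : C * ∑ s, (c s * (σ s - 1)) • gammaSet Γ s = 0 := by
    rw [← sub_eq_zero.mpr hY, transpose_sum, Finset.sum_mul, Finset.mul_sum, Finset.mul_sum,
      ← Finset.sum_sub_distrib]
    refine Finset.sum_congr rfl fun s _ => ?_
    rw [transpose_smul, smul_mul_assoc, gammaSet,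
      gammaProd_transpose_mul hanti hCΓ (Finset.sort_nodup _ _), Finset.length_sort,
      ← Int.cast_smul_eq_zsmul K, smul_smul, mul_smul_comm, mul_smul_comm, ← sub_smul, mul_sub,
      mul_one]
  have hzero : ∑ s, (c s * (σ s - 1)) • gammaSet Γ s = 0 := hC.mul_right_eq_zero.mp hsum
  have := Fintype.linearIndependent_iff.mp (linearIndependent_gammaSet (K := K) hsq hanti)
    (fun s => c s * (σ s - 1)) hzero s
  norm_num [σ, hs.neg_one_pow] at this
  exact this

lemma conjSum_eq_sub_trace_smul_one {Γ : Fin 7 → Matrix (Fin 8) (Fin 8) K}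
    (hsq : ∀ i, Γ i * Γ i = -1) (hanti : ∀ i j, i ≠ j → Γ i * Γ j = -(Γ j * Γ i))
    {C : Matrix (Fin 8) (Fin 8) K} (hC : IsUnit C) (hCΓ : ∀ i, (Γ i)ᵀ * C = -(C * Γ i))
    {Y : Matrix (Fin 8) (Fin 8) K} (hY : Yᵀ * C = C * Y) :
    conjSum Γ Y = Y - Y.trace • 1 := by
  have hspan := (linearIndependent_gammaSet hsq hanti).span_eq_top_of_card_eq_finrank'
    (by rw [Module.finrank_matrix, Module.finrank_self, Fintype.card_fin, mul_one]; decide)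
  have hYspan : Y ∈ Submodule.span K
      (Set.range fun s : {s : Finset (Fin 7) // 2 * s.card < 7} => gammaSet Γ s) :=
    hspan ▸ Submodule.mem_top
  obtain ⟨c, hc⟩ := (Submodule.mem_span_range_iff_exists_fun K).mp hYspan
  let D := conjSum Γ - (LinearMap.id - (traceLinearMap (Fin 8) K K).smulRight 1)
  suffices D Y = 0 by
    simpa only [D, LinearMap.sub_apply, LinearMap.id_apply, LinearMap.smulRight_apply,
      traceLinearMap_apply, sub_eq_zero] using this
  rw [← hc] at hY ⊢
  rw [map_sum]
  refine Finset.sum_eq_zero fun ⟨s, hs⟩ _ => ?_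
  rw [map_smul]
  have hcard : s.card = 0 ∨ s.card = 1 ∨ s.card = 2 ∨ s.card = 3 := by omega
  rcases hcard with h | h | h | h
  · rw [Finset.card_eq_zero] at h
    subst h
    have h1 := conjSum_gammaSet hsq hanti (∅ : Finset (Fin 7))
    rw [gammaSet_empty] at h1
    simp only [D, gammaSet_empty, LinearMap.sub_apply, LinearMap.id_apply,
      LinearMap.smulRight_apply, traceLinearMap_apply, trace_one, h1, Finset.card_empty,
      Fintype.card_fin]
    module
  · rw [coeff_eq_zero_of_transpose_mul_eq_mul hsq hanti hC hCΓ hY (by simp [h]), zero_smul]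
  · rw [coeff_eq_zero_of_transpose_mul_eq_mul hsq hanti hC hCΓ hY (by simp [h]; decide), zero_smul]
  · have htr := trace_gammaSet_eq_zero hsq hanti (s := s) (by rintro rfl; simp at h) (by omega)
    simp [D, conjSum_gammaSet hsq hanti, h, htr]

end Field

section Gamma2

variable {Γ : Fin 7 → Matrix (Fin 8) (Fin 8) ℂ}

lemma gamma2_transpose_mul {C : Matrix (Fin 8) (Fin 8) ℂ} (hCΓ : ∀ μ, (Γ μ)ᵀ * C = -(C * Γ μ))
    (μ ν : Fin 7) : (gamma2 Γ μ ν)ᵀ * C = -(C * gamma2 Γ μ ν) := by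
  have hswap : ∀ a b, (Γ a * Γ b)ᵀ * C = C * (Γ b * Γ a) := fun a b => by
    rw [transpose_mul, mul_assoc, hCΓ, mul_neg, ← mul_assoc, hCΓ, neg_mul, neg_neg, mul_assoc]
  rw [gamma2, transpose_smul, transpose_sub, smul_mul_assoc, sub_mul, hswap, hswap, mul_smul_comm,
    mul_sub, ← smul_neg, neg_sub]

lemma gamma2_mul_mul_gamma2 (hsq : ∀ i, Γ i * Γ i = -1)
    (hanti : ∀ i j, i ≠ j → Γ i * Γ j = -(Γ j * Γ i)) (X : Matrix (Fin 8) (Fin 8) ℂ)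
    (μ ν : Fin 7) :
    gamma2 Γ μ ν * X * gamma2 Γ μ ν = (if μ = ν then X else 0) - Γ ν * (Γ μ * X * Γ μ) * Γ ν := by
  by_cases h : μ = ν
  · subst h
    have hassoc : Γ μ * (Γ μ * X * Γ μ) * Γ μ = (Γ μ * Γ μ) * X * (Γ μ * Γ μ) := by noncomm_ring
    simp [gamma2, hassoc, hsq]
  · have hg : gamma2 Γ μ ν = Γ μ * Γ ν := by
      rw [gamma2, hanti ν μ (Ne.symm h), sub_neg_eq_add, ← two_smul ℂ, smul_smul]
      norm_num
    calc gamma2 Γ μ ν * X * gamma2 Γ μ ν = -((Γ ν * Γ μ) * X * (Γ μ * Γ ν)) := by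
          rw [hg, hanti μ ν h]; noncomm_ring
      _ = _ := by rw [if_neg h]; noncomm_ring

lemma sum_gamma2_mul_mul_gamma2 (hsq : ∀ i, Γ i * Γ i = -1)
    (hanti : ∀ i j, i ≠ j → Γ i * Γ j = -(Γ j * Γ i)) (X : Matrix (Fin 8) (Fin 8) ℂ) :
    ∑ μ, ∑ ν, gamma2 Γ μ ν * X * gamma2 Γ μ ν = (7 : ℂ) • X - conjSum Γ (conjSum Γ X) := by
  simp_rw [gamma2_mul_mul_gamma2 hsq hanti, Finset.sum_sub_distrib, conjSum_apply,
    Finset.mul_sum, Finset.sum_mul]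
  rw [Finset.sum_comm (γ := Fin 7) (f := fun μ ν => Γ ν * (Γ μ * X * Γ μ) * Γ ν)]
  simp only [Finset.sum_ite_eq, Finset.mem_univ, if_true, Finset.sum_const, Finset.card_univ,
    Fintype.card_fin]
  module

end Gamma2

end GammaMatrices

open GammaMatrices in
/-- For all `s, t ∈ ℂ⁸`:
`(t̄t)·s − (t̄s)·t = (1/6)·Σ_{μ,ν=1}^{7}(s̄Γ_{μν}t)·Γ_{μν}t`,
the odd–odd–odd Jacobi identity of `F(4)` in its odd contact grading. -/
theorem odd_jacobi_identity
    (Γ : Fin 7 → Matrix (Fin 8) (Fin 8) ℂ)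
    (hΓ : ∀ μ ν, Γ μ * Γ ν + Γ ν * Γ μ =
      if μ = ν then (-2 : ℂ) • (1 : Matrix (Fin 8) (Fin 8) ℂ) else 0)
    (C : Matrix (Fin 8) (Fin 8) ℂ) (hCunit : IsUnit C) (hCsymm : Cᵀ = C)
    (hCΓ : ∀ μ, (Γ μ)ᵀ * C = -(C * Γ μ))
    (s t : Fin 8 → ℂ) :
    (t ⬝ᵥ C.mulVec t) • s - (t ⬝ᵥ C.mulVec s) • t
      = (6 : ℂ)⁻¹ • ∑ μ, ∑ ν,
          (s ⬝ᵥ C.mulVec ((gamma2 Γ μ ν).mulVec t)) • (gamma2 Γ μ ν).mulVec t := by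
  have hsq : ∀ μ, Γ μ * Γ μ = -1 := fun μ => by
    have h := hΓ μ μ
    rw [if_pos rfl, ← two_smul ℂ, show (-2 : ℂ) • (1 : Matrix (Fin 8) (Fin 8) ℂ) = (2 : ℂ) • -1 by
      module] at h
    exact smul_right_injective _ two_ne_zero h
  have hanti : ∀ μ ν, μ ≠ ν → Γ μ * Γ ν = -(Γ ν * Γ μ) := fun μ ν h =>
    eq_neg_of_add_eq_zero_left (by simpa [h] using hΓ μ ν)
  set Y := vecMulVec t (C *ᵥ t)
  have hYsymm : Yᵀ * C = C * Y := transpose_vecMulVec_mul hCsymm t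
  have hconj : ∀ X, Xᵀ * C = C * X → conjSum Γ X = X - X.trace • 1 := fun X hX =>
    conjSum_eq_sub_trace_smul_one hsq hanti hCunit hCΓ hX
  have hsum : ∑ μ, ∑ ν, gamma2 Γ μ ν * Y * gamma2 Γ μ ν = (6 : ℂ) • (Y - Y.trace • 1) := by
    rw [sum_gamma2_mul_mul_gamma2 hsq hanti, hconj Y hYsymm, map_sub, map_smul, hconj Y hYsymm,
      hconj 1 (by simp), trace_one, Fintype.card_fin]
    module
  symm
  calc (6 : ℂ)⁻¹ • ∑ μ, ∑ ν, (s ⬝ᵥ C *ᵥ (gamma2 Γ μ ν *ᵥ t)) • gamma2 Γ μ ν *ᵥ t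
      = -(6 : ℂ)⁻¹ • ((∑ μ, ∑ ν, gamma2 Γ μ ν * Y * gamma2 Γ μ ν) *ᵥ s) := by
        simp_rw [dotProduct_mulVec_smul_mulVec (gamma2_transpose_mul hCΓ _ _), sum_mulVec,
          Finset.sum_neg_distrib, neg_smul, smul_neg]
        rfl
    _ = (t ⬝ᵥ C *ᵥ t) • s - (t ⬝ᵥ C *ᵥ s) • t := by
        rw [hsum, smul_mulVec, sub_mulVec, smul_mulVec, one_mulVec,
          vecMulVec_mulVec_of_transpose_eq hCsymm, trace_vecMulVec]
        module
end
end

section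
/- Polarized form of the odd Jacobi identity: for all s, t, u ∈ ℂ⁸ one has 2(t̄u)·s − (t̄s)·u − (ūs)·t = (1/6)·Σ_{μ,ν=1}^{7}[ (s̄Γ_{μν}t)·Γ_{μν}u + (s̄Γ_{μν}u)·Γ_{μν}t ] in ℂ⁸. -/
/-!
The products `Γ_S = Γ_{s₁} ⋯ Γ_{sₖ}` (`s₁ < ⋯ < sₖ`, `k ≤ 3`) are 64 trace-orthogonal matrices,
hence a basis of the 8 × 8 matrices. Since `Γ_Sᵀ C = (-1)^{k(k+1)/2} C Γ_S`, a matrix `X` with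
`Xᵀ C = C X` only involves the `Γ_S` with `k ∈ {0, 3}`, and `Σ_ν Γ_ν Γ_S Γ_ν = (-1)^k (2k - 7) Γ_S`
then gives `Σ_ν Γ_ν X Γ_ν = X - tr X`. Applied twice, and using
`Γ_ν Γ_μ X Γ_μ Γ_ν = -Γ_{μν} X Γ_{μν} + δ_{μν} X`, this yields
`Σ_{μ,ν} Γ_{μν} X Γ_{μν} = 6 X - 6 tr X`. The identity is this equation for the `C`-symmetric
`X = (u tᵀ + t uᵀ) C`, applied to `s`.
-/

open Matrix

noncomputable section

open Finset

section Anticommutation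

variable {ι n K : Type*} [DecidableEq ι] [Fintype n] [DecidableEq n] [Field K]
  {Γ : ι → Matrix n n K}

theorem gamma_mul_self_of_anticomm [CharZero K]
    (hΓ : ∀ μ ν, Γ μ * Γ ν + Γ ν * Γ μ = if μ = ν then (-2 : K) • 1 else 0) (μ : ι) :
    Γ μ * Γ μ = -1 := by
  have h : (2 : K) • (Γ μ * Γ μ) = (2 : K) • -1 := by
    rw [two_smul, hΓ μ μ, if_pos rfl, smul_neg, neg_smul]
  exact smul_right_injective _ two_ne_zero h

theorem gamma_mul_comm_of_anticomm
    (hΓ : ∀ μ ν, Γ μ * Γ ν + Γ ν * Γ μ = if μ = ν then (-2 : K) • 1 else 0) {μ ν : ι}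
    (h : μ ≠ ν) : Γ μ * Γ ν = -(Γ ν * Γ μ) :=
  eq_neg_of_add_eq_zero_left ((hΓ μ ν).trans (if_neg h))

end Anticommutation

section GammaProd

variable {ι n K : Type*} [Fintype n] [DecidableEq n] [CommRing K]
  {Γ : ι → Matrix n n K}

def gammaProd (Γ : ι → Matrix n n K) (l : List ι) : Matrix n n K := (l.map Γ).prod

@[simp] theorem gammaProd_nil : gammaProd Γ [] = 1 := rfl

@[simp] theorem gammaProd_cons (μ : ι) (l : List ι) :
    gammaProd Γ (μ :: l) = Γ μ * gammaProd Γ l := List.prod_cons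

@[simp] theorem gammaProd_append (l l' : List ι) :
    gammaProd Γ (l ++ l') = gammaProd Γ l * gammaProd Γ l' := by
  simp [gammaProd]

variable [DecidableEq ι]

-- `l.length + l.count ν` has the parity of the number of entries of `l` other than `ν`.
theorem gamma_mul_gammaProd (hanti : ∀ μ ν, μ ≠ ν → Γ μ * Γ ν = -(Γ ν * Γ μ))
    (ν : ι) (l : List ι) :
    Γ ν * gammaProd Γ l = (-1 : K) ^ (l.length + l.count ν) • (gammaProd Γ l * Γ ν) := by
  induction l with
  | nil => simp
  | cons μ l ih =>
    rw [gammaProd_cons, ← mul_assoc]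
    rcases eq_or_ne μ ν with rfl | hμν
    · conv_lhs => rw [mul_assoc, ih, mul_smul_comm, ← mul_assoc]
      rw [List.length_cons, List.count_cons_self]
      module
    · rw [hanti ν μ hμν.symm, neg_mul, mul_assoc, ih, mul_smul_comm, ← mul_assoc,
        List.count_cons_of_ne hμν, List.length_cons]
      module

theorem gammaProd_mul_gamma (hanti : ∀ μ ν, μ ≠ ν → Γ μ * Γ ν = -(Γ ν * Γ μ))
    (ν : ι) (l : List ι) :
    gammaProd Γ l * Γ ν = (-1 : K) ^ (l.length + l.count ν) • (Γ ν * gammaProd Γ l) := by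
  rw [gamma_mul_gammaProd hanti, smul_smul, ← pow_add, Even.neg_one_pow ⟨_, rfl⟩, one_smul]

theorem gamma_mul_gammaProd_mul_gamma (hsq : ∀ μ, Γ μ * Γ μ = -1)
    (hanti : ∀ μ ν, μ ≠ ν → Γ μ * Γ ν = -(Γ ν * Γ μ)) (ν : ι) (l : List ι) :
    Γ ν * gammaProd Γ l * Γ ν = -((-1 : K) ^ (l.length + l.count ν) • gammaProd Γ l) := by
  rw [gamma_mul_gammaProd hanti, smul_mul_assoc, mul_assoc, hsq, mul_neg_one, smul_neg]

theorem gammaProd_mul_self (hsq : ∀ μ, Γ μ * Γ μ = -1)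
    (hanti : ∀ μ ν, μ ≠ ν → Γ μ * Γ ν = -(Γ ν * Γ μ)) {l : List ι} (hl : l.Nodup) :
    gammaProd Γ l * gammaProd Γ l = (-1 : K) ^ (l.length + 1).choose 2 • 1 := by
  induction l with
  | nil => simp
  | cons μ l ih =>
    obtain ⟨hμ, hl⟩ := List.nodup_cons.mp hl
    rw [gammaProd_cons, ← mul_assoc, gamma_mul_gammaProd_mul_gamma hsq hanti,
      List.count_eq_zero.mpr hμ, neg_mul, smul_mul_assoc, ih hl, smul_smul, ← neg_smul,
      List.length_cons, Nat.choose_succ_succ' (l.length + 1), Nat.choose_one_right]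
    congr 1
    ring

theorem transpose_gammaProd_mul {C : Matrix n n K}
    (hanti : ∀ μ ν, μ ≠ ν → Γ μ * Γ ν = -(Γ ν * Γ μ)) (hCΓ : ∀ μ, (Γ μ)ᵀ * C = -(C * Γ μ)) {l : List ι} (hl : l.Nodup) :
    (gammaProd Γ l)ᵀ * C = (-1 : K) ^ (l.length + 1).choose 2 • (C * gammaProd Γ l) := by
  induction l with
  | nil => simp
  | cons μ l ih =>
    obtain ⟨hμ, hl⟩ := List.nodup_cons.mp hl
    rw [gammaProd_cons, Matrix.transpose_mul, mul_assoc, hCΓ, mul_neg, ← mul_assoc, ih hl,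
      smul_mul_assoc, mul_assoc, gammaProd_mul_gamma hanti, List.count_eq_zero.mpr hμ,
      mul_smul_comm, smul_smul, ← neg_smul, ← mul_assoc, List.length_cons,
      Nat.choose_succ_succ' (l.length + 1), Nat.choose_one_right]
    congr 1
    ring

theorem sum_gamma_mul_gammaProd_mul_gamma [Fintype ι] (hsq : ∀ μ, Γ μ * Γ μ = -1)
    (hanti : ∀ μ ν, μ ≠ ν → Γ μ * Γ ν = -(Γ ν * Γ μ)) {l : List ι} (hl : l.Nodup) :
    ∑ ν, Γ ν * gammaProd Γ l * Γ ν
      = ((-1 : K) ^ l.length * (2 * l.length - Fintype.card ι)) • gammaProd Γ l := by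
  have hsign : ∀ ν, -(-1 : K) ^ (l.length + l.count ν)
      = (-1) ^ l.length * (2 * (if ν ∈ l then 1 else 0) - 1) := by
    intro ν
    rw [hl.count]
    split_ifs <;> ring
  have hcount : #(univ.filter (· ∈ l)) = l.length := by
    rw [← List.toFinset_card_of_nodup hl]
    congr 1
    ext
    simp
  simp only [gamma_mul_gammaProd_mul_gamma hsq hanti, ← neg_smul, hsign, ← Finset.sum_smul,
    ← Finset.mul_sum, Finset.sum_sub_distrib, Finset.sum_boole, hcount,
    Finset.sum_const, Finset.card_univ]
  simp

end GammaProd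

section Trace

variable {ι n K : Type*} [Fintype n] [DecidableEq n] [Field K] [CharZero K]
  {Γ : ι → Matrix n n K}

theorem trace_gammaProd_eq_zero [DecidableEq ι] (hsq : ∀ μ, Γ μ * Γ μ = -1)
    (hanti : ∀ μ ν, μ ≠ ν → Γ μ * Γ ν = -(Γ ν * Γ μ)) {l : List ι} {ν : ι}
    (hodd : Odd (l.length + l.count ν)) : trace (gammaProd Γ l) = 0 := by
  have hconj := gamma_mul_gammaProd_mul_gamma hsq hanti ν l
  rw [hodd.neg_one_pow, neg_one_smul, neg_neg] at hconj
  have hcycle : trace (Γ ν * gammaProd Γ l * Γ ν) = -trace (gammaProd Γ l) := by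
    rw [trace_mul_cycle, hsq, neg_one_mul, trace_neg]
  rw [hconj] at hcycle
  exact self_eq_neg.mp hcycle

variable [LinearOrder ι]

def gammaSet (Γ : ι → Matrix n n K) (S : Finset ι) : Matrix n n K :=
  gammaProd Γ (S.sort (· ≤ ·))

theorem trace_gammaSet_mul_gammaSet_of_ne [Fintype ι] (hsq : ∀ μ, Γ μ * Γ μ = -1)
    (hanti : ∀ μ ν, μ ≠ ν → Γ μ * Γ ν = -(Γ ν * Γ μ)) {S T : Finset ι} (hST : S ≠ T)
    (hcard : #S + #T < Fintype.card ι) :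
    trace (gammaSet Γ S * gammaSet Γ T) = 0 := by
  have hcount : ∀ ν, ((S.sort (· ≤ ·)) ++ T.sort (· ≤ ·)).count ν
      = (if ν ∈ S then 1 else 0) + (if ν ∈ T then 1 else 0) := by
    intro ν
    simp [(S.sort_nodup _).count, (T.sort_nodup _).count]
  have hlength : ((S.sort (· ≤ ·)) ++ T.sort (· ≤ ·)).length = #S + #T := by simp
  rw [gammaSet, gammaSet, ← gammaProd_append]
  -- Some `Γ_ν` anticommutes with `Γ_S Γ_T`: any `ν ∈ S ∆ T` if `#S + #T` is even, and any
  -- `ν ∉ S ∪ T` if it is odd.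
  rcases Nat.even_or_odd (#S + #T) with heven | hodd
  · obtain ⟨ν, hν⟩ := symmDiff_nonempty.mpr hST
    refine trace_gammaProd_eq_zero hsq hanti (ν := ν) ?_
    rw [hlength, hcount]
    rcases mem_symmDiff.mp hν with ⟨hS, hT⟩ | ⟨hT, hS⟩ <;> simpa [hS, hT] using heven.add_one
  · obtain ⟨ν, -, hν⟩ := exists_mem_notMem_of_card_lt_card
      ((card_union_le S T).trans_lt (hcard.trans_eq card_univ.symm))
    refine trace_gammaProd_eq_zero hsq hanti (ν := ν) ?_
    rw [hlength, hcount]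
    simpa [not_or.mp (mem_union.not.mp hν)] using hodd

theorem trace_gammaSet_mul_self_ne_zero [Nonempty n] (hsq : ∀ μ, Γ μ * Γ μ = -1)
    (hanti : ∀ μ ν, μ ≠ ν → Γ μ * Γ ν = -(Γ ν * Γ μ)) (S : Finset ι) :
    trace (gammaSet Γ S * gammaSet Γ S) ≠ 0 := by
  rw [gammaSet, gammaProd_mul_self hsq hanti (S.sort_nodup _), trace_smul, trace_one, smul_eq_mul]
  simp

theorem linearIndependent_gammaSet [Fintype ι] [Nonempty n] (hsq : ∀ μ, Γ μ * Γ μ = -1)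
    (hanti : ∀ μ ν, μ ≠ ν → Γ μ * Γ ν = -(Γ ν * Γ μ)) :
    LinearIndependent K fun S : {S : Finset ι // 2 * #S < Fintype.card ι} ↦ gammaSet Γ S := by
  rw [Fintype.linearIndependent_iff]
  intro c hc T
  have htrace : ∑ S, c S * trace (gammaSet Γ S * gammaSet Γ T) = 0 := by
    simpa [Finset.sum_mul, trace_sum] using congr_arg (fun X ↦ trace (X * gammaSet Γ T)) hc
  rw [Finset.sum_eq_single T] at htrace
  · exact (mul_eq_zero.mp htrace).resolve_right (trace_gammaSet_mul_self_ne_zero hsq hanti T)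
  · intro S _ hST
    rw [trace_gammaSet_mul_gammaSet_of_ne hsq hanti (Subtype.coe_injective.ne hST) (by omega),
      mul_zero]
  · simp

end Trace

section SymmOuter

variable {n K : Type*} [Fintype n] [CommRing K]

def symmOuter (C : Matrix n n K) (t u : n → K) : Matrix n n K :=
  (vecMulVec u t + vecMulVec t u) * C

theorem symmOuter_mulVec (C : Matrix n n K) (t u s : n → K) :
    symmOuter C t u *ᵥ s = (t ⬝ᵥ C *ᵥ s) • u + (u ⬝ᵥ C *ᵥ s) • t := by
  simp [symmOuter, ← mulVec_mulVec, add_mulVec, vecMulVec_mulVec]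

theorem transpose_symmOuter_mul {C : Matrix n n K} (hC : Cᵀ = C) (t u : n → K) :
    (symmOuter C t u)ᵀ * C = C * symmOuter C t u := by
  rw [symmOuter, transpose_mul, transpose_add, transpose_vecMulVec, transpose_vecMulVec, hC,
    add_comm, mul_assoc]

theorem dotProduct_mulVec_comm_of_transpose_eq {C : Matrix n n K} (hC : Cᵀ = C) (x y : n → K) :
    x ⬝ᵥ C *ᵥ y = y ⬝ᵥ C *ᵥ x := by
  conv_lhs => rw [← hC]
  exact dotProduct_transpose_mulVec C x y

theorem trace_symmOuter {C : Matrix n n K} (hC : Cᵀ = C) (t u : n → K) :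
    trace (symmOuter C t u) = 2 * (t ⬝ᵥ C *ᵥ u) := by
  have htrace : ∀ x y : n → K, trace (vecMulVec x y * C) = y ⬝ᵥ C *ᵥ x := fun x y ↦ by
    rw [trace_mul_comm, mul_vecMulVec, trace_vecMulVec, dotProduct_comm]
  rw [symmOuter, add_mul, trace_add, htrace, htrace, dotProduct_mulVec_comm_of_transpose_eq hC u,
    two_mul]

theorem dotProduct_mulVec_mulVec_of_transpose_mul {C M : Matrix n n K} (hC : Cᵀ = C)
    (hM : Mᵀ * C = -(C * M)) (s t : n → K) :
    t ⬝ᵥ C *ᵥ (M *ᵥ s) = -(s ⬝ᵥ C *ᵥ (M *ᵥ t)) := by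
  have hCM : C * M = -(Mᵀ * C) := by rw [hM, neg_neg]
  rw [mulVec_mulVec, hCM, neg_mulVec, dotProduct_neg, ← mulVec_mulVec,
    dotProduct_transpose_mulVec, dotProduct_comm, dotProduct_mulVec_comm_of_transpose_eq hC]

theorem mul_symmOuter_mul_mulVec {C M : Matrix n n K} (hC : Cᵀ = C)
    (hM : Mᵀ * C = -(C * M)) (s t u : n → K) :
    (M * symmOuter C t u * M) *ᵥ s
      = -((s ⬝ᵥ C *ᵥ (M *ᵥ t)) • M *ᵥ u + (s ⬝ᵥ C *ᵥ (M *ᵥ u)) • M *ᵥ t) := by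
  rw [← mulVec_mulVec, ← mulVec_mulVec, symmOuter_mulVec,
    dotProduct_mulVec_mulVec_of_transpose_mul hC hM s t,
    dotProduct_mulVec_mulVec_of_transpose_mul hC hM s u, mulVec_add, mulVec_smul, mulVec_smul]
  module

end SymmOuter

section SevenDimensions

variable {K : Type*} [Field K] [CharZero K] {Γ : Fin 7 → Matrix (Fin 8) (Fin 8) K}

theorem span_gammaSet_eq_top (hsq : ∀ μ, Γ μ * Γ μ = -1)
    (hanti : ∀ μ ν, μ ≠ ν → Γ μ * Γ ν = -(Γ ν * Γ μ)) :
    Submodule.span K (Set.range fun S : {S : Finset (Fin 7) // 2 * #S < Fintype.card (Fin 7)} ↦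
      gammaSet Γ S) = ⊤ := by
  have hcard : Fintype.card {S : Finset (Fin 7) // 2 * #S < Fintype.card (Fin 7)} = 64 := by
    decide
  have : Nonempty {S : Finset (Fin 7) // 2 * #S < Fintype.card (Fin 7)} :=
    Fintype.card_pos_iff.mp (by omega)
  refine (linearIndependent_gammaSet hsq hanti).span_eq_top_of_card_eq_finrank ?_
  rw [hcard, Module.finrank_matrix]
  simp

theorem sum_gamma_mul_gammaSet_mul_gamma (hsq : ∀ μ, Γ μ * Γ μ = -1)
    (hanti : ∀ μ ν, μ ≠ ν → Γ μ * Γ ν = -(Γ ν * Γ μ)) {S : Finset (Fin 7)} (hS : #S ≤ 3)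
    (heven : Even ((#S + 1).choose 2)) :
    ∑ ν, Γ ν * gammaSet Γ S * Γ ν = gammaSet Γ S - trace (gammaSet Γ S) • 1 := by
  rw [gammaSet, sum_gamma_mul_gammaProd_mul_gamma hsq hanti (S.sort_nodup _), length_sort,
    Fintype.card_fin]
  interval_cases hSc : #S
  · rw [card_eq_zero.mp hSc]
    simp only [sort_empty, gammaProd_nil, trace_one, Fintype.card_fin]
    module
  · simp [Nat.even_iff] at heven
  · simp [Nat.even_iff] at heven
  · obtain ⟨ν, -, hν⟩ := exists_mem_notMem_of_card_lt_card
      (show #S < #(univ : Finset (Fin 7)) by simp [hSc])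
    have hodd : Odd ((S.sort (· ≤ ·)).length + (S.sort (· ≤ ·)).count ν) := by
      rw [length_sort, hSc, List.count_eq_zero.mpr ((mem_sort _).not.mpr hν)]
      decide
    rw [trace_gammaProd_eq_zero hsq hanti hodd]
    norm_num

theorem sum_gamma_mul_mul_gamma_of_transpose_mul_eq {C X : Matrix (Fin 8) (Fin 8) K}
    (hsq : ∀ μ, Γ μ * Γ μ = -1) (hanti : ∀ μ ν, μ ≠ ν → Γ μ * Γ ν = -(Γ ν * Γ μ))
    (hCΓ : ∀ μ, (Γ μ)ᵀ * C = -(C * Γ μ)) (hC : IsUnit C) (hX : Xᵀ * C = C * X) :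
    ∑ ν, Γ ν * X * Γ ν = X - trace X • 1 := by
  obtain ⟨c, rfl⟩ := (Submodule.mem_span_range_iff_exists_fun K).mp
    ((span_gammaSet_eq_top hsq hanti).symm ▸ Submodule.mem_top : X ∈ _)
  -- `Xᵀ C = C X` kills the coefficients of the `Γ_S` with `#S ∈ {1, 2}`.
  have hc : ∀ S, c S = 0 ∨ Even ((#S.1 + 1).choose 2) := by
    have hXT : (∑ S, c S • gammaSet Γ S)ᵀ * C
        = C * ∑ S, (c S * (-1) ^ (#S.1 + 1).choose 2) • gammaSet Γ S := by
      simp only [transpose_sum, transpose_smul, Finset.sum_mul, smul_mul_assoc, gammaSet,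
        transpose_gammaProd_mul hanti hCΓ (sort_nodup _ _), length_sort, Finset.mul_sum,
        mul_smul_comm, smul_smul]
    have hsym : ∑ S, (c S * ((-1) ^ (#S.1 + 1).choose 2 - 1)) • gammaSet Γ S = 0 := by
      simp only [mul_sub, mul_one, sub_smul, Finset.sum_sub_distrib,
        hC.mul_left_cancel (hXT.symm.trans hX), sub_self]
    intro S
    have hli := linearIndependent_gammaSet hsq hanti
    rw [Fintype.linearIndependent_iff] at hli
    have hS := hli _ hsym S
    rcases Nat.even_or_odd ((#S.1 + 1).choose 2) with heven | hodd
    · exact Or.inr heven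
    · rw [hodd.neg_one_pow] at hS
      exact Or.inl ((mul_eq_zero.mp hS).resolve_right (by norm_num))
  simp only [Finset.mul_sum, Finset.sum_mul, mul_smul_comm, smul_mul_assoc, trace_sum,
    trace_smul, smul_eq_mul, Finset.sum_smul, ← Finset.sum_sub_distrib]
  rw [Finset.sum_comm]
  refine Finset.sum_congr rfl fun S _ ↦ ?_
  rcases hc S with hS | hS
  · simp [hS]
  · have hS3 : #S.1 ≤ 3 := by
      have := S.2
      simp only [Fintype.card_fin] at this
      omega
    rw [← Finset.smul_sum, sum_gamma_mul_gammaSet_mul_gamma hsq hanti hS3 hS, smul_sub, smul_smul]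

end SevenDimensions

section Gamma2

variable {Γ : Fin 7 → Matrix (Fin 8) (Fin 8) ℂ}

@[simp] theorem gamma2_self (μ : Fin 7) : gamma2 Γ μ μ = 0 := by
  simp [gamma2]

theorem gamma2_of_ne (hanti : ∀ μ ν, μ ≠ ν → Γ μ * Γ ν = -(Γ ν * Γ μ)) {μ ν : Fin 7}
    (h : μ ≠ ν) : gamma2 Γ μ ν = Γ μ * Γ ν := by
  rw [gamma2, hanti μ ν h]
  module

theorem transpose_gamma2_mul {C : Matrix (Fin 8) (Fin 8) ℂ}
    (hCΓ : ∀ μ, (Γ μ)ᵀ * C = -(C * Γ μ)) (μ ν : Fin 7) :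
    (gamma2 Γ μ ν)ᵀ * C = -(C * gamma2 Γ μ ν) := by
  have hprod : ∀ μ ν, (Γ μ * Γ ν)ᵀ * C = C * (Γ ν * Γ μ) := fun μ ν ↦ by
    rw [transpose_mul, mul_assoc, hCΓ, mul_neg, ← mul_assoc, hCΓ, neg_mul, neg_neg, mul_assoc]
  rw [gamma2, transpose_smul, transpose_sub, smul_mul_assoc, sub_mul, hprod, hprod,
    mul_smul_comm, mul_sub]
  module

theorem gamma_mul_gamma_mul_mul_gamma_mul_gamma (hsq : ∀ μ, Γ μ * Γ μ = -1)
    (hanti : ∀ μ ν, μ ≠ ν → Γ μ * Γ ν = -(Γ ν * Γ μ)) (X : Matrix (Fin 8) (Fin 8) ℂ)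
    (μ ν : Fin 7) :
    Γ ν * (Γ μ * X * Γ μ) * Γ ν = -(gamma2 Γ μ ν * X * gamma2 Γ μ ν) + if μ = ν then X else 0 := by
  rw [show Γ ν * (Γ μ * X * Γ μ) * Γ ν = Γ ν * Γ μ * X * (Γ μ * Γ ν) by simp only [mul_assoc]]
  rcases eq_or_ne μ ν with rfl | h
  · simp [hsq]
  · rw [if_neg h, add_zero, gamma2_of_ne hanti h, hanti ν μ h.symm, neg_mul, neg_mul]

theorem sum_gamma2_mul_mul_gamma2_of_transpose_mul_eq {C X : Matrix (Fin 8) (Fin 8) ℂ}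
    (hsq : ∀ μ, Γ μ * Γ μ = -1) (hanti : ∀ μ ν, μ ≠ ν → Γ μ * Γ ν = -(Γ ν * Γ μ))
    (hCΓ : ∀ μ, (Γ μ)ᵀ * C = -(C * Γ μ)) (hC : IsUnit C) (hX : Xᵀ * C = C * X) :
    ∑ μ, ∑ ν, gamma2 Γ μ ν * X * gamma2 Γ μ ν = (6 : ℂ) • X - (6 * trace X) • 1 := by
  have hT {Y : Matrix (Fin 8) (Fin 8) ℂ} (hY : Yᵀ * C = C * Y) :=
    sum_gamma_mul_mul_gamma_of_transpose_mul_eq hsq hanti hCΓ hC hY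
  have hX' : (X - trace X • 1)ᵀ * C = C * (X - trace X • 1) := by
    rw [transpose_sub, transpose_smul, transpose_one, sub_mul, mul_sub, hX, smul_mul_assoc,
      mul_smul_comm, one_mul, mul_one]
  have htwice : ∑ ν, Γ ν * (∑ μ, Γ μ * X * Γ μ) * Γ ν = X + (6 * trace X) • 1 := by
    rw [hT hX, hT hX', trace_sub, trace_smul, trace_one]
    simp only [Fintype.card_fin, smul_eq_mul]
    module
  have hpairs : ∑ ν, Γ ν * (∑ μ, Γ μ * X * Γ μ) * Γ ν
      = -∑ μ, ∑ ν, gamma2 Γ μ ν * X * gamma2 Γ μ ν + 7 • X := by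
    simp only [Finset.mul_sum, Finset.sum_mul, gamma_mul_gamma_mul_mul_gamma_mul_gamma hsq hanti]
    rw [Finset.sum_comm]
    simp only [Finset.sum_add_distrib, Finset.sum_neg_distrib, Finset.sum_ite_eq, mem_univ,
      if_true, sum_const, card_univ, Fintype.card_fin]
  calc ∑ μ, ∑ ν, gamma2 Γ μ ν * X * gamma2 Γ μ ν
      = 7 • X - (-∑ μ, ∑ ν, gamma2 Γ μ ν * X * gamma2 Γ μ ν + 7 • X) := by abel
    _ = (6 : ℂ) • X - (6 * trace X) • 1 := by
      rw [← hpairs, htwice]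
      module

end Gamma2

/-- **Polarized form of the odd Jacobi identity**: for all `s, t, u ∈ ℂ⁸`,
`2(t̄u)·s − (t̄s)·u − (ūs)·t
  = (1/6)·Σ_{μ,ν=1}^{7}[(s̄Γ_{μν}t)·Γ_{μν}u + (s̄Γ_{μν}u)·Γ_{μν}t]`. -/
theorem polarized_odd_jacobi_identity
    (Γ : Fin 7 → Matrix (Fin 8) (Fin 8) ℂ)
    (hΓ : ∀ μ ν, Γ μ * Γ ν + Γ ν * Γ μ =
      if μ = ν then (-2 : ℂ) • (1 : Matrix (Fin 8) (Fin 8) ℂ) else 0)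
    (C : Matrix (Fin 8) (Fin 8) ℂ) (hCunit : IsUnit C) (hCsymm : Cᵀ = C)
    (hCΓ : ∀ μ, (Γ μ)ᵀ * C = -(C * Γ μ))
    (s t u : Fin 8 → ℂ) :
    (2 : ℂ) • ((t ⬝ᵥ C.mulVec u) • s) - (t ⬝ᵥ C.mulVec s) • u - (u ⬝ᵥ C.mulVec s) • t
      = (6 : ℂ)⁻¹ • ∑ μ, ∑ ν,
          ((s ⬝ᵥ C.mulVec ((gamma2 Γ μ ν).mulVec t)) • (gamma2 Γ μ ν).mulVec u
            + (s ⬝ᵥ C.mulVec ((gamma2 Γ μ ν).mulVec u)) • (gamma2 Γ μ ν).mulVec t) := by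
  have hsq := gamma_mul_self_of_anticomm hΓ
  have hanti : ∀ μ ν, μ ≠ ν → Γ μ * Γ ν = -(Γ ν * Γ μ) :=
    fun _ _ ↦ gamma_mul_comm_of_anticomm hΓ
  have hsum := congrArg (· *ᵥ s) <| sum_gamma2_mul_mul_gamma2_of_transpose_mul_eq hsq hanti hCΓ
    hCunit (transpose_symmOuter_mul hCsymm t u)
  simp only [sum_mulVec, mul_symmOuter_mul_mulVec hCsymm (transpose_gamma2_mul hCΓ _ _),
    Finset.sum_neg_distrib, sub_mulVec, smul_mulVec, one_mulVec, symmOuter_mulVec,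
    trace_symmOuter hCsymm] at hsum
  rw [neg_eq_iff_eq_neg.mp hsum]
  module

end
end

section
/- Let ω^{μν} : ℂ⁸ → ℂ (1 ≤ μ,ν ≤ 7) be linear maps with ω^{μν} = −ω^{νμ}. If Σ_{μ,ν=1}^{7} ω^{μν}(s)·Γ_{μν}s = 0 for every s ∈ ℂ⁸, then ω^{μν} = 0 for all μ,ν. (Equivalently: a linear map ω from the 8-dimensional spinor module to so(7) satisfying σ(ω_s)s = 0 for all spinors s vanishes identically.) -/
open Matrix

noncomputable section

abbrev M8' := Matrix (Fin 8) (Fin 8) ℂ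

lemma sum_mulVec' {ι : Type*} (s : Finset ι) (f : ι → M8') (v : Fin 8 → ℂ) :
    (∑ i ∈ s, f i).mulVec v = ∑ i ∈ s, (f i).mulVec v :=
  map_sum (AddMonoidHom.mk' (fun M : M8' => M.mulVec v)
    (fun M N => Matrix.add_mulVec M N v)) f s

lemma tr_anti {X Y : M8'} (h : X * Y = -(Y * X)) : trace (X * Y) = 0 := by
  have h1 : trace (X * Y) = trace (Y * X) := trace_mul_comm X Y
  have h2 : trace (X * Y) = -trace (Y * X) := by rw [h, trace_neg]
  linear_combination (h1 + h2) / 2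

lemma tr_zero_of_anti {X S : M8'} (hS : S * S = -1) (h : X * S = -(S * X)) :
    trace X = 0 := by
  have h' : S * X = -(X * S) := by rw [h, neg_neg]
  have h1 : trace ((X * S) * S) = -trace X := by
    rw [mul_assoc, hS, mul_neg_one, trace_neg]
  have h2 : trace ((X * S) * S) = -trace ((X * S) * S) := by
    conv_lhs => rw [trace_mul_comm, ← mul_assoc, h', neg_mul, trace_neg]
  have h3 : trace ((X * S) * S) = 0 := by linear_combination h2 / 2
  rw [h3] at h1
  linear_combination h1

lemma fresh7 (a b c d e : Fin 7) :
    ∃ σ : Fin 7, σ ≠ a ∧ σ ≠ b ∧ σ ≠ c ∧ σ ≠ d ∧ σ ≠ e := by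
  by_contra hcon
  push_neg at hcon
  have hsub : (Finset.univ : Finset (Fin 7)) ⊆ {a, b, c, d, e} := by
    intro x _
    simp only [Finset.mem_insert, Finset.mem_singleton]
    by_contra hx
    push_neg at hx
    exact hx.2.2.2.2 (hcon x hx.1 hx.2.1 hx.2.2.1 hx.2.2.2.1)
  have hcard := Finset.card_le_card hsub
  have h5 : ({a, b, c, d, e} : Finset (Fin 7)).card ≤ 5 := by
    calc ({a, b, c, d, e} : Finset (Fin 7)).card
        ≤ ({b, c, d, e} : Finset (Fin 7)).card + 1 := Finset.card_insert_le _ _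
      _ ≤ (({c, d, e} : Finset (Fin 7)).card + 1) + 1 :=
          Nat.add_le_add_right (Finset.card_insert_le _ _) 1
      _ ≤ ((({d, e} : Finset (Fin 7)).card + 1) + 1) + 1 :=
          Nat.add_le_add_right (Nat.add_le_add_right (Finset.card_insert_le _ _) 1) 1
      _ ≤ (((({e} : Finset (Fin 7)).card + 1) + 1) + 1) + 1 :=
          Nat.add_le_add_right (Nat.add_le_add_right
            (Nat.add_le_add_right (Finset.card_insert_le _ _) 1) 1) 1
      _ ≤ 5 := by simp
  rw [Finset.card_univ] at hcard
  simp at hcard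
  omega

section helpers
variable {Γ : Fin 7 → Matrix (Fin 8) (Fin 8) ℂ}
  (hΓ : ∀ μ ν, Γ μ * Γ ν + Γ ν * Γ μ =
    if μ = ν then (-2 : ℂ) • (1 : Matrix (Fin 8) (Fin 8) ℂ) else 0)
include hΓ

lemma gsq (μ : Fin 7) : Γ μ * Γ μ = -1 := by
  have := hΓ μ μ
  simp at this
  have h2 : (2:ℂ) • (Γ μ * Γ μ) = (2:ℂ) • (-1 : M8') := by
    rw [two_smul, this]; simp
  exact smul_right_injective _ (by norm_num) h2

lemma ganti {μ ν : Fin 7} (h : μ ≠ ν) : Γ μ * Γ ν = -(Γ ν * Γ μ) := by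
  have := hΓ μ ν
  rw [if_neg h] at this
  linear_combination (norm := abel) this

-- rewriting helpers (all words kept left-associated)
lemma gfront_sq (B : M8') (x : Fin 7) : Γ x * Γ x * B = -B := by
  rw [gsq hΓ, neg_one_mul]

lemma gmid_sq (A B : M8') (x : Fin 7) : A * Γ x * Γ x * B = -(A * B) := by
  rw [mul_assoc A (Γ x) (Γ x), gsq hΓ, mul_neg_one, neg_mul]

lemma gend_sq (A : M8') (x : Fin 7) : A * Γ x * Γ x = -A := by
  rw [mul_assoc, gsq hΓ, mul_neg_one]

lemma gswap_mid (A B : M8') {x y : Fin 7} (hxy : x ≠ y) :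
    A * Γ x * Γ y * B = -(A * Γ y * Γ x * B) := by
  rw [mul_assoc A (Γ x) (Γ y), ganti hΓ hxy, mul_neg, neg_mul,
    ← mul_assoc A (Γ y) (Γ x)]

lemma gswap_end (A : M8') {x y : Fin 7} (hxy : x ≠ y) :
    A * Γ x * Γ y = -(A * Γ y * Γ x) := by
  rw [mul_assoc, ganti hΓ hxy, mul_neg, ← mul_assoc]

lemma gstepA {σ : Fin 7} (P : M8') (x : Fin 7) (hx : x ≠ σ)
    (hP : P * Γ σ = -(Γ σ * P)) : (P * Γ x) * Γ σ = Γ σ * (P * Γ x) := by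
  calc (P * Γ x) * Γ σ = P * (Γ x * Γ σ) := by rw [mul_assoc]
    _ = P * (-(Γ σ * Γ x)) := by rw [ganti hΓ hx]
    _ = -((P * Γ σ) * Γ x) := by rw [mul_neg, mul_assoc]
    _ = -((-(Γ σ * P)) * Γ x) := by rw [hP]
    _ = Γ σ * (P * Γ x) := by rw [neg_mul, neg_neg, mul_assoc]

lemma gstepC {σ : Fin 7} (P : M8') (x : Fin 7) (hx : x ≠ σ)
    (hP : P * Γ σ = Γ σ * P) : (P * Γ x) * Γ σ = -(Γ σ * (P * Γ x)) := by
  calc (P * Γ x) * Γ σ = P * (Γ x * Γ σ) := by rw [mul_assoc]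
    _ = P * (-(Γ σ * Γ x)) := by rw [ganti hΓ hx]
    _ = -((P * Γ σ) * Γ x) := by rw [mul_neg, mul_assoc]
    _ = -((Γ σ * P) * Γ x) := by rw [hP]
    _ = -(Γ σ * (P * Γ x)) := by rw [mul_assoc]

/-- trace of a product of 5 gammas is 0. -/
lemma trace5 (a b c d e : Fin 7) :
    trace (Γ a * Γ b * Γ c * Γ d * Γ e) = 0 := by
  obtain ⟨σ, ha, hb, hc, hd, he⟩ := fresh7 a b c d e
  have w1 : Γ a * Γ σ = -(Γ σ * Γ a) := ganti hΓ (Ne.symm ha)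
  have w2 := gstepA hΓ (Γ a) b (Ne.symm hb) w1
  have w3 := gstepC hΓ (Γ a * Γ b) c (Ne.symm hc) w2
  have w4 := gstepA hΓ (Γ a * Γ b * Γ c) d (Ne.symm hd) w3
  have w5 := gstepC hΓ (Γ a * Γ b * Γ c * Γ d) e (Ne.symm he) w4
  exact tr_zero_of_anti (gsq hΓ σ) w5

lemma trace2 {a b : Fin 7} (h : a ≠ b) : trace (Γ a * Γ b) = 0 :=
  tr_anti (ganti hΓ h)

/-- trace of product of 4 gammas, first two with distinct indices. -/
lemma trace4 {α β : Fin 7} (hab : α ≠ β) (μ ν : Fin 7) :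
    trace (Γ α * Γ β * Γ μ * Γ ν) =
      (if μ = α ∧ ν = β then (-8 : ℂ) else 0) +
      (if μ = β ∧ ν = α then (8 : ℂ) else 0) := by
  rcases eq_or_ne μ ν with rfl | hmn
  · rw [gend_sq hΓ (Γ α * Γ β) μ, trace_neg, trace2 hΓ hab]
    have h1 : ¬(μ = α ∧ μ = β) := fun ⟨h1, h2⟩ => hab (h1 ▸ h2 ▸ rfl)
    have h2 : ¬(μ = β ∧ μ = α) := fun ⟨h1, h2⟩ => hab (h2 ▸ h1 ▸ rfl)
    rw [if_neg h1, if_neg h2]; ring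
  · rcases eq_or_ne μ α with rfl | hμα
    · rcases eq_or_ne ν β with rfl | hνβ
      · -- trace (Γα Γβ Γα Γβ) = -8
        have key : Γ μ * Γ ν * Γ μ * Γ ν = -1 := by
          rw [gswap_mid hΓ (Γ μ) (Γ ν) (Ne.symm hmn),
            gfront_sq hΓ (Γ ν) μ, neg_mul, gsq hΓ ν, neg_neg]
        rw [key]
        simp [hab, Ne.symm hmn]
      · -- μ = α, ν ∉ {α, β}
        have key : Γ μ * Γ β * Γ μ * Γ ν = Γ β * Γ ν := by
          rw [gswap_mid hΓ (Γ μ) (Γ ν) (Ne.symm hab),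
            gfront_sq hΓ (Γ β) μ, neg_mul, neg_neg]
        rw [key, trace2 hΓ (Ne.symm hνβ)]
        simp [hνβ, hab]
    · rcases eq_or_ne μ β with rfl | hμβ
      · rcases eq_or_ne ν α with rfl | hνα
        · -- trace (Γα Γβ Γβ Γα) = 8
          have key : Γ ν * Γ μ * Γ μ * Γ ν = 1 := by
            rw [gmid_sq hΓ (Γ ν) (Γ ν) μ, gsq hΓ ν, neg_neg]
          rw [key]
          simp [hμα, Ne.symm hab]
        · -- μ = β, ν ∉ {α, β}
          have key : Γ α * Γ μ * Γ μ * Γ ν = -(Γ α * Γ ν) := by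
            rw [gmid_sq hΓ (Γ α) (Γ ν) μ]
          rw [key, trace_neg, trace2 hΓ (Ne.symm hνα)]
          simp [hμα, hνα]
      · -- μ ∉ {α, β}
        rcases eq_or_ne ν α with rfl | hνα
        · -- ν = α : word = -(Γβ Γμ)
          have key : Γ ν * Γ β * Γ μ * Γ ν = -(Γ β * Γ μ) := by
            rw [gswap_end hΓ (Γ ν * Γ β) hμα,
              gswap_mid hΓ (Γ ν) (Γ μ) (Ne.symm hab), neg_neg,
              gfront_sq hΓ (Γ β) ν, neg_mul]
          rw [key, trace_neg, trace2 hΓ (Ne.symm hμβ)]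
          simp [hμα, hμβ]
        · rcases eq_or_ne ν β with rfl | hνβ
          · -- ν = β : word = Γα Γμ
            have key : Γ α * Γ ν * Γ μ * Γ ν = Γ α * Γ μ := by
              rw [gswap_end hΓ (Γ α * Γ ν) hmn,
                gmid_sq hΓ (Γ α) (Γ μ) ν, neg_neg]
            rw [key, trace2 hΓ (Ne.symm hμα)]
            simp [hμα, hmn]
          · -- all four distinct: anticommuting trick
            have w1 : Γ β * Γ α = -(Γ α * Γ β) := ganti hΓ (Ne.symm hab)
            have w2 := gstepA hΓ (Γ β) μ hμα w1
            have w3 := gstepC hΓ (Γ β * Γ μ) ν hνα w2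
            have hanti : Γ α * (Γ β * Γ μ * Γ ν) = -((Γ β * Γ μ * Γ ν) * Γ α) := by
              rw [w3, neg_neg]
            have hz := tr_anti hanti
            rw [show Γ α * (Γ β * Γ μ * Γ ν) = Γ α * Γ β * Γ μ * Γ ν by
              rw [← mul_assoc, ← mul_assoc]] at hz
            rw [hz]
            simp [hμα, hμβ]

lemma trace_gamma2 {α β : Fin 7} (hab : α ≠ β) (μ ν : Fin 7) :
    trace (Γ α * Γ β * gamma2 Γ μ ν)
      = (if ν = β ∧ μ = α then (-8:ℂ) else 0)
        + (if ν = α ∧ μ = β then (8:ℂ) else 0) := by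
  rw [gamma2, mul_smul_comm, trace_smul, mul_sub, trace_sub, smul_eq_mul]
  rw [show Γ α * Γ β * (Γ μ * Γ ν) = Γ α * Γ β * Γ μ * Γ ν from
      (mul_assoc _ _ _).symm,
    show Γ α * Γ β * (Γ ν * Γ μ) = Γ α * Γ β * Γ ν * Γ μ from
      (mul_assoc _ _ _).symm]
  rw [trace4 hΓ hab μ ν, trace4 hΓ hab ν μ]
  split_ifs <;> simp_all <;> norm_num

/-- contraction identity: Σ_ρ Γρ Γ_{μν} Γρ = -3 Γ_{μν} -/
lemma contract (μ ν : Fin 7) :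
    ∑ ρ, Γ ρ * gamma2 Γ μ ν * Γ ρ = (-3 : ℂ) • gamma2 Γ μ ν := by
  rcases eq_or_ne μ ν with rfl | hmn
  · simp [gamma2]
  · have hg : gamma2 Γ μ ν = Γ μ * Γ ν := by
      rw [gamma2, ganti hΓ (Ne.symm hmn), sub_neg_eq_add,
        ← two_smul ℂ (Γ μ * Γ ν), smul_smul]
      norm_num
    rw [hg]
    have hterm : ∀ ρ : Fin 7, Γ ρ * (Γ μ * Γ ν) * Γ ρ =
        (if ρ = μ then (2:ℂ) • (Γ μ * Γ ν) else 0) +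
        ((if ρ = ν then (2:ℂ) • (Γ μ * Γ ν) else 0) + -(Γ μ * Γ ν)) := by
      intro ρ
      have hassoc : Γ ρ * (Γ μ * Γ ν) * Γ ρ = Γ ρ * Γ μ * Γ ν * Γ ρ := by
        rw [← mul_assoc]
      rcases eq_or_ne ρ μ with rfl | hρμ
      · rw [hassoc, gfront_sq hΓ (Γ ν) ρ, neg_mul, ← ganti hΓ hmn,
          if_pos rfl, if_neg hmn]
        module
      · rcases eq_or_ne ρ ν with rfl | hρν
        · rw [hassoc, gend_sq hΓ (Γ ρ * Γ μ) ρ]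
          have : -(Γ ρ * Γ μ) = Γ μ * Γ ρ := (ganti hΓ hmn).symm
          rw [this, if_neg (Ne.symm hmn), if_pos rfl]
          module
        · rw [hassoc, gswap_end hΓ (Γ ρ * Γ μ) (Ne.symm hρν),
            gswap_mid hΓ (Γ ρ) (Γ ν) (Ne.symm hρμ), neg_neg,
            gfront_sq hΓ (Γ μ) ρ, neg_mul, if_neg hρμ, if_neg hρν]
          simp
    calc ∑ ρ, Γ ρ * (Γ μ * Γ ν) * Γ ρ
        = ∑ ρ : Fin 7, ((if ρ = μ then (2:ℂ) • (Γ μ * Γ ν) else 0) +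
          ((if ρ = ν then (2:ℂ) • (Γ μ * Γ ν) else 0) + -(Γ μ * Γ ν))) :=
          Finset.sum_congr rfl fun ρ _ => hterm ρ
      _ = (-3:ℂ) • (Γ μ * Γ ν) := by
          rw [Finset.sum_add_distrib, Finset.sum_add_distrib,
            Finset.sum_ite_eq' Finset.univ μ, Finset.sum_ite_eq' Finset.univ ν,
            if_pos (Finset.mem_univ μ), if_pos (Finset.mem_univ ν),
            Finset.sum_const, Finset.card_univ, Fintype.card_fin]
          module

end helpers

/-- Let `ω^{μν} : ℂ⁸ → ℂ` be linear maps with `ω^{μν} = −ω^{νμ}`.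
If `Σ_{μ,ν} ω^{μν}(s)·Γ_{μν}s = 0` for every `s ∈ ℂ⁸`, then `ω = 0`.
(A linear map from the spinor module to `so(7)` with `σ(ω_s)s = 0` for all `s` vanishes.) -/
theorem omega_vanishes
    (Γ : Fin 7 → Matrix (Fin 8) (Fin 8) ℂ)
    (hΓ : ∀ μ ν, Γ μ * Γ ν + Γ ν * Γ μ =
      if μ = ν then (-2 : ℂ) • (1 : Matrix (Fin 8) (Fin 8) ℂ) else 0)
    (C : Matrix (Fin 8) (Fin 8) ℂ) (hCunit : IsUnit C) (hCsymm : Cᵀ = C)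
    (hCΓ : ∀ μ, (Γ μ)ᵀ * C = -(C * Γ μ))
    (ω : Fin 7 → Fin 7 → ((Fin 8 → ℂ) →ₗ[ℂ] ℂ))
    (hskew : ∀ μ ν, ω μ ν = -ω ν μ)
    (h : ∀ s : Fin 8 → ℂ, ∑ μ, ∑ ν, ω μ ν s • (gamma2 Γ μ ν).mulVec s = 0) :
    ∀ μ ν, ω μ ν = 0 := by
  classical
  suffices H : ∀ α β : Fin 7, α ≠ β → ω α β = 0 by
    intro μ ν
    rcases eq_or_ne μ ν with rfl | hne
    · refine LinearMap.ext fun s => ?_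
      have h0 : ω μ μ s = -(ω μ μ s) := by
        conv_lhs => rw [hskew μ μ]
        simp
      have : ω μ μ s = 0 := by linear_combination h0 / 2
      simpa using this
    · exact H μ ν hne
  intro α β hab
  refine LinearMap.ext fun u => ?_
  simp only [LinearMap.zero_apply]
  set A : (Fin 8 → ℂ) → M8' := fun s => ∑ μ, ∑ ν, ω μ ν s • gamma2 Γ μ ν with hAdef
  have hAs : ∀ s, (A s).mulVec s = 0 := by
    intro s
    simp only [hAdef, sum_mulVec', Matrix.smul_mulVec]
    exact h s
  have hAadd : ∀ s t, A (s + t) = A s + A t := by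
    intro s t
    simp only [hAdef, map_add, add_smul, Finset.sum_add_distrib]
  have hpol : ∀ s t, (A s).mulVec t = -((A t).mulVec s) := by
    intro s t
    have h0 := hAs (s + t)
    rw [hAadd s t, Matrix.add_mulVec, Matrix.mulVec_add, Matrix.mulVec_add,
      hAs s, hAs t] at h0
    have hsum : (A s).mulVec t + (A t).mulVec s = 0 := by
      rw [← h0]; abel
    exact eq_neg_of_add_eq_zero_left hsum
  have hAconj : ∀ s, ∑ ρ, Γ ρ * A s * Γ ρ = (-3:ℂ) • A s := by
    intro s
    calc ∑ ρ, Γ ρ * A s * Γ ρ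
        = ∑ μ, ∑ ν, ω μ ν s • ∑ ρ, Γ ρ * gamma2 Γ μ ν * Γ ρ := by
          simp only [hAdef, Finset.mul_sum, Finset.sum_mul, mul_smul_comm,
            smul_mul_assoc, Finset.smul_sum]
          rw [Finset.sum_comm]
          exact Finset.sum_congr rfl fun μ _ => Finset.sum_comm
      _ = ∑ μ, ∑ ν, ω μ ν s • ((-3:ℂ) • gamma2 Γ μ ν) :=
          Finset.sum_congr rfl fun μ _ => Finset.sum_congr rfl fun ν _ => by
            rw [contract hΓ μ ν]
      _ = (-3:ℂ) • A s := by
          rw [hAdef, Finset.smul_sum]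
          exact Finset.sum_congr rfl fun μ _ => by
            rw [Finset.smul_sum]
            exact Finset.sum_congr rfl fun ν _ => smul_comm _ _ _
  have hkey : ∀ v, ∑ ρ, Γ ρ * A ((Γ ρ).mulVec v) = (-3:ℂ) • A v := by
    intro v
    have hvec : ∀ s, (∑ ρ, Γ ρ * A ((Γ ρ).mulVec v)).mulVec s
        = ((-3:ℂ) • A v).mulVec s := by
      intro s
      calc (∑ ρ, Γ ρ * A ((Γ ρ).mulVec v)).mulVec s
          = ∑ ρ, (Γ ρ).mulVec ((A ((Γ ρ).mulVec v)).mulVec s) := by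
            rw [sum_mulVec']
            exact Finset.sum_congr rfl fun ρ _ => by
              rw [← Matrix.mulVec_mulVec]
        _ = ∑ ρ, (Γ ρ).mulVec (-((A s).mulVec ((Γ ρ).mulVec v))) :=
            Finset.sum_congr rfl fun ρ _ => by
              rw [hpol ((Γ ρ).mulVec v) s]
        _ = -∑ ρ, (Γ ρ * A s * Γ ρ).mulVec v := by
            rw [← Finset.sum_neg_distrib]
            exact Finset.sum_congr rfl fun ρ _ => by
              rw [Matrix.mulVec_neg, Matrix.mulVec_mulVec, Matrix.mulVec_mulVec]
        _ = -(((-3:ℂ) • A s).mulVec v) := by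
            rw [← sum_mulVec', hAconj s]
        _ = (3:ℂ) • (A s).mulVec v := by
            rw [Matrix.smul_mulVec]
            module
        _ = (3:ℂ) • (-((A v).mulVec s)) := by rw [hpol s v]
        _ = ((-3:ℂ) • A v).mulVec s := by
            rw [Matrix.smul_mulVec]
            module
    ext i j
    have hx := congrFun (hvec (Pi.single j 1)) i
    simpa [Matrix.mulVec_single] using hx
  have htrA : ∀ v, trace (Γ α * Γ β * A v) = -16 * ω α β v := by
    intro v
    have hg := trace_gamma2 hΓ hab
    simp only [hAdef, Finset.mul_sum, mul_smul_comm, trace_sum, trace_smul,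
      smul_eq_mul, hg]
    simp only [mul_add, mul_ite, mul_zero, Finset.sum_add_distrib, ite_and]
    simp only [Finset.sum_ite_eq', Finset.mem_univ, if_true]
    have hsymm : ω β α v = -(ω α β v) := by
      rw [hskew β α]; simp
    rw [hsymm]
    ring
  have htrD : ∀ v, trace (Γ α * Γ β * (∑ ρ, Γ ρ * A ((Γ ρ).mulVec v))) = 0 := by
    intro v
    rw [Finset.mul_sum, trace_sum]
    refine Finset.sum_eq_zero fun ρ _ => ?_
    simp only [hAdef, Finset.mul_sum, mul_smul_comm, trace_sum, trace_smul,
      smul_eq_mul]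
    refine Finset.sum_eq_zero fun μ _ => Finset.sum_eq_zero fun ν _ => ?_
    have hz : trace (Γ α * Γ β * (Γ ρ * gamma2 Γ μ ν)) = 0 := by
      rw [gamma2, mul_smul_comm, mul_smul_comm, trace_smul, mul_sub, mul_sub,
        trace_sub]
      have a1 : Γ α * Γ β * (Γ ρ * (Γ μ * Γ ν)) = Γ α * Γ β * Γ ρ * Γ μ * Γ ν := by
        rw [← mul_assoc, ← mul_assoc]
      have a2 : Γ α * Γ β * (Γ ρ * (Γ ν * Γ μ)) = Γ α * Γ β * Γ ρ * Γ ν * Γ μ := by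
        rw [← mul_assoc, ← mul_assoc]
      rw [a1, a2, trace5 hΓ, trace5 hΓ]
      simp
    rw [hz, mul_zero]
  have hfin := htrD u
  rw [hkey u] at hfin
  rw [mul_smul_comm, trace_smul, smul_eq_mul, htrA u] at hfin
  linear_combination hfin / 48

end
end

section
/- Decomposition of so(8) under spin(7): the Lie algebra so(ℂ⁸, C) := { X ∈ M₈(ℂ) : XᵀC + CX = 0 } is equal to the internal direct sum span_ℂ{Γ_μ : 1 ≤ μ ≤ 7} ⊕ span_ℂ{Γ_μΓ_ν : 1 ≤ μ < ν ≤ 7}; in particular these two spans have complex dimensions 7 and 21 respectively and intersect trivially. -/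
open Matrix

noncomputable section

namespace So8Aux

abbrev Mat := Matrix (Fin 8) (Fin 8) ℂ

variable {Γ : Fin 7 → Mat}

section basic
variable (hΓ : ∀ μ ν, Γ μ * Γ ν + Γ ν * Γ μ =
    if μ = ν then (-2 : ℂ) • (1 : Mat) else 0)
include hΓ

lemma sq (μ : Fin 7) : Γ μ * Γ μ = -1 := by
  have h := hΓ μ μ
  rw [if_pos rfl] at h
  have h2 : (2:ℂ) • (Γ μ * Γ μ) = (2:ℂ) • (-1 : Mat) := by
    rw [two_smul, h]
    simp [smul_smul]
  exact smul_right_injective _ two_ne_zero h2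

lemma anticomm {μ ν : Fin 7} (h : μ ≠ ν) : Γ μ * Γ ν = -(Γ ν * Γ μ) := by
  have h1 := hΓ μ ν
  rw [if_neg h] at h1
  exact eq_neg_of_add_eq_zero_left h1

lemma sq' (μ : Fin 7) (B : Mat) : Γ μ * (Γ μ * B) = -B := by
  rw [← mul_assoc, sq hΓ, neg_one_mul]

lemma swap' {μ ν : Fin 7} (h : μ ≠ ν) (B : Mat) :
    Γ μ * (Γ ν * B) = -(Γ ν * (Γ μ * B)) := by
  rw [← mul_assoc, anticomm hΓ h, neg_mul, mul_assoc]

lemma tr1 (μ : Fin 7) : trace (Γ μ) = 0 := by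
  obtain ⟨ν, hν⟩ := exists_ne μ
  have key : Γ ν * (Γ μ * Γ ν) = Γ μ := by
    rw [swap' hΓ hν (Γ ν), sq hΓ]
    simp
  have h2 : trace (Γ ν * (Γ μ * Γ ν)) = -trace (Γ μ) := by
    rw [trace_mul_comm, mul_assoc, sq hΓ]
    simp
  rw [key] at h2
  exact CharZero.eq_neg_self_iff.mp h2

lemma tr2 {μ ν : Fin 7} (h : μ ≠ ν) : trace (Γ μ * Γ ν) = 0 := by
  have h2 : trace (Γ μ * Γ ν) = -trace (Γ μ * Γ ν) := by
    conv_lhs => rw [trace_mul_comm, anticomm hΓ (Ne.symm h), trace_neg]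
  exact CharZero.eq_neg_self_iff.mp h2

lemma trsq (μ : Fin 7) : trace (Γ μ * Γ μ) = -8 := by
  rw [sq hΓ]
  simp [trace_one]

omit hΓ in
lemma exists_ne3 (a b c : Fin 7) : ∃ τ : Fin 7, τ ≠ a ∧ τ ≠ b ∧ τ ≠ c := by
  by_contra h
  push_neg at h
  have hsub : (Finset.univ : Finset (Fin 7)) ⊆ {a, b, c} := by
    intro τ _
    simp only [Finset.mem_insert, Finset.mem_singleton]
    by_contra hτ
    push_neg at hτ
    exact hτ.2.2 (h τ hτ.1 hτ.2.1)
  have h7 : (7:ℕ) ≤ ({a, b, c} : Finset (Fin 7)).card := by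
    simpa using Finset.card_le_card hsub
  have h3 : ({a, b, c} : Finset (Fin 7)).card ≤ 3 := by
    apply le_trans (Finset.card_insert_le _ _)
    have := Finset.card_insert_le b ({c} : Finset (Fin 7))
    simp at this ⊢
    omega
  omega

lemma tr3 {a b c : Fin 7} (hab : a ≠ b) (hac : a ≠ c) (hbc : b ≠ c) :
    trace (Γ a * (Γ b * Γ c)) = 0 := by
  obtain ⟨τ, hτa, hτb, hτc⟩ := exists_ne3 a b c
  have key : Γ τ * ((Γ a * (Γ b * Γ c)) * Γ τ) = Γ a * (Γ b * Γ c) := by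
    simp only [mul_assoc]
    rw [anticomm hΓ (Ne.symm hτc)]
    simp only [mul_neg]
    rw [swap' hΓ (Ne.symm hτb) (Γ c)]
    simp only [mul_neg, neg_neg]
    rw [swap' hΓ (Ne.symm hτa) (Γ b * Γ c)]
    simp only [mul_neg, neg_neg]
    rw [sq' hΓ τ (Γ a * (Γ b * Γ c)), neg_neg]
  have h2 : trace (Γ τ * ((Γ a * (Γ b * Γ c)) * Γ τ)) = -trace (Γ a * (Γ b * Γ c)) := by
    rw [trace_mul_comm, mul_assoc, sq hΓ]
    simp
  rw [key] at h2
  exact CharZero.eq_neg_self_iff.mp h2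

lemma tr4 {a b c d : Fin 7} (hab : a ≠ b) (hac : a ≠ c) (had : a ≠ d)
    (hbc : b ≠ c) (hbd : b ≠ d) (hcd : c ≠ d) :
    trace (Γ a * (Γ b * (Γ c * Γ d))) = 0 := by
  have key : Γ a * ((Γ a * (Γ b * (Γ c * Γ d))) * Γ a) = Γ a * (Γ b * (Γ c * Γ d)) := by
    simp only [mul_assoc]
    rw [sq' hΓ a (Γ b * (Γ c * (Γ d * Γ a)))]
    rw [anticomm hΓ (Ne.symm had)]
    simp only [mul_neg, neg_neg]
    rw [swap' hΓ (Ne.symm hac) (Γ d)]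
    simp only [mul_neg, neg_neg]
    rw [swap' hΓ (Ne.symm hab) (Γ c * Γ d), neg_neg]
  have h2 : trace (Γ a * ((Γ a * (Γ b * (Γ c * Γ d))) * Γ a)) =
      -trace (Γ a * (Γ b * (Γ c * Γ d))) := by
    rw [trace_mul_comm, mul_assoc, sq hΓ]
    simp
  rw [key] at h2
  exact CharZero.eq_neg_self_iff.mp h2

lemma trMixed {μ a b : Fin 7} (hab : a ≠ b) : trace (Γ μ * (Γ a * Γ b)) = 0 := by
  rcases eq_or_ne μ a with rfl | hμa
  · rw [sq' hΓ μ (Γ b)]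
    simp [tr1 hΓ]
  · rcases eq_or_ne μ b with rfl | hμb
    · rw [swap' hΓ (Ne.symm hab) (Γ μ), sq hΓ]
      simp [tr1 hΓ]
    · exact tr3 hΓ hμa hμb hab

lemma trPair {a b c d : Fin 7} (hab : a < b) (hcd : c < d) :
    trace ((Γ a * Γ b) * (Γ c * Γ d)) =
      if a = c ∧ b = d then (-8 : ℂ) else 0 := by
  rw [mul_assoc]
  rcases eq_or_ne a c with rfl | hac
  · rcases eq_or_ne b d with rfl | hbd
    · rw [if_pos ⟨rfl, rfl⟩]
      rw [swap' hΓ hab.ne' (Γ b)]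
      simp only [mul_neg]
      rw [sq' hΓ a (Γ b * Γ b), sq hΓ]
      simp [trace_one]
    · rw [if_neg (by tauto)]
      rw [swap' hΓ hab.ne' (Γ d)]
      simp only [mul_neg]
      rw [sq' hΓ a (Γ b * Γ d)]
      simp [tr2 hΓ hbd]
  · rw [if_neg (by tauto)]
    rcases eq_or_ne a d with rfl | had
    · -- here c < a < b
      rw [anticomm hΓ hcd.ne]
      simp only [mul_neg, trace_neg]
      rw [swap' hΓ hab.ne' (Γ c)]
      simp only [mul_neg, trace_neg, neg_neg]
      rw [sq' hΓ a (Γ b * Γ c)]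
      simp [tr2 hΓ (hcd.trans hab).ne']
    · rcases eq_or_ne b c with rfl | hbc
      · rw [sq' hΓ b (Γ d)]
        simp [tr2 hΓ (hab.trans hcd).ne]
      · rcases eq_or_ne b d with rfl | hbd
        · rw [swap' hΓ hcd.ne' (Γ b), sq hΓ]
          simp [tr2 hΓ hac]
        · exact tr4 hΓ hab.ne hac had hbc hbd hcd.ne

end basic

abbrev Pairs := {p : Fin 7 × Fin 7 // p.1 < p.2}

def fam (Γ : Fin 7 → Mat) : Fin 7 ⊕ Pairs → Mat :=
  Sum.elim Γ (fun p => Γ p.1.1 * Γ p.1.2)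

section basic2
variable (hΓ : ∀ μ ν, Γ μ * Γ ν + Γ ν * Γ μ =
    if μ = ν then (-2 : ℂ) • (1 : Mat) else 0)
include hΓ

lemma ortho (i j : Fin 7 ⊕ Pairs) :
    trace (fam Γ i * fam Γ j) = if i = j then (-8 : ℂ) else 0 := by
  rcases i with μ | ⟨⟨a, b⟩, hab⟩ <;> rcases j with ν | ⟨⟨c, d⟩, hcd⟩
  · simp only [fam, Sum.elim_inl]
    rcases eq_or_ne μ ν with rfl | h
    · simp [trsq hΓ]
    · simp [h, tr2 hΓ h]
  · simp only [fam, Sum.elim_inl, Sum.elim_inr]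
    rw [if_neg (by simp)]
    exact trMixed hΓ hcd.ne
  · simp only [fam, Sum.elim_inl, Sum.elim_inr]
    rw [if_neg (by simp), trace_mul_comm]
    exact trMixed hΓ hab.ne
  · simp only [fam, Sum.elim_inr]
    rw [trPair hΓ hab hcd]
    by_cases h : a = c ∧ b = d
    · obtain ⟨rfl, rfl⟩ := h
      simp
    · rw [if_neg h, if_neg]
      intro hej
      exact h (by simpa [Subtype.mk_eq_mk, Prod.ext_iff] using Sum.inr_injective hej)

lemma linIndep : LinearIndependent ℂ (fam Γ) := by
  rw [Fintype.linearIndependent_iff]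
  intro g hg j
  have h0 : trace ((∑ i, g i • fam Γ i) * fam Γ j) = 0 := by rw [hg]; simp
  rw [Finset.sum_mul] at h0
  simp only [smul_mul_assoc, trace_sum, trace_smul, smul_eq_mul, ortho hΓ] at h0
  simp only [mul_ite, mul_zero, Finset.sum_ite_eq', Finset.mem_univ, if_true] at h0
  rcases mul_eq_zero.mp h0 with h | h
  · exact h
  · norm_num at h

end basic2

/-- skew-symmetric 8×8 matrices -/
def skew : Submodule ℂ Mat where
  carrier := {X | Xᵀ = -X}
  add_mem' := by
    intro X Y hX hY
    simp only [Set.mem_setOf_eq] at *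
    rw [transpose_add, hX, hY, neg_add]
  zero_mem' := by simp
  smul_mem' := by
    intro c X hX
    simp only [Set.mem_setOf_eq] at *
    rw [transpose_smul, hX, smul_neg]

def evMap : skew →ₗ[ℂ] ({p : Fin 8 × Fin 8 // p.1 < p.2} → ℂ) where
  toFun X := fun p => X.1 p.1.1 p.1.2
  map_add' X Y := rfl
  map_smul' c X := rfl

lemma skew_entry {X : Mat} (hX : X ∈ skew) (i j : Fin 8) : X j i = -X i j := by
  have := congrFun (congrFun (hX : Xᵀ = -X) i) j
  simpa [Matrix.transpose_apply, Matrix.neg_apply] using this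

lemma evMap_injective : Function.Injective evMap := by
  intro X Y h
  apply Subtype.ext
  ext i j
  rcases lt_trichotomy i j with hij | rfl | hij
  · exact congrFun h ⟨(i, j), hij⟩
  · have h1 : X.1 i i = -X.1 i i := skew_entry X.2 i i
    have h2 : Y.1 i i = -Y.1 i i := skew_entry Y.2 i i
    rw [CharZero.eq_neg_self_iff.mp h1, CharZero.eq_neg_self_iff.mp h2]
  · have h1 : X.1 i j = -X.1 j i := skew_entry X.2 j i
    have h2 : Y.1 i j = -Y.1 j i := skew_entry Y.2 j i
    rw [h1, h2]
    exact congrArg Neg.neg (congrFun h ⟨(j, i), hij⟩)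

lemma evMap_surjective : Function.Surjective evMap := by
  intro v
  refine ⟨⟨Matrix.of fun i j =>
    if h : i < j then v ⟨(i, j), h⟩ else if h' : j < i then -v ⟨(j, i), h'⟩ else 0, ?_⟩, ?_⟩
  · show _ = _
    ext i j
    simp only [Matrix.transpose_apply, Matrix.neg_apply, Matrix.of_apply]
    rcases lt_trichotomy i j with h | rfl | h
    · rw [dif_neg (asymm h), dif_pos h, dif_pos h]
    · rw [dif_neg (lt_irrefl i), dif_neg (lt_irrefl i)]
      simp
    · rw [dif_pos h, dif_neg (asymm h), dif_pos h, neg_neg]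
  · funext p
    obtain ⟨⟨i, j⟩, hp⟩ := p
    show dite _ _ _ = _
    rw [dif_pos hp]

lemma finrank_skew : Module.finrank ℂ skew = 28 := by
  rw [(LinearEquiv.ofBijective evMap ⟨evMap_injective, evMap_surjective⟩).finrank_eq,
    Module.finrank_fintype_fun_eq_card]
  decide

/-- the Lie algebra so(C) -/
def soC (C : Mat) : Submodule ℂ Mat where
  carrier := {X | Xᵀ * C + C * X = 0}
  zero_mem' := by simp
  add_mem' := by
    intro X Y hX hY
    simp only [Set.mem_setOf_eq] at *
    have h : (X + Y)ᵀ * C + C * (X + Y) = (Xᵀ * C + C * X) + (Yᵀ * C + C * Y) := by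
      rw [transpose_add, add_mul, mul_add]
      abel
    rw [h, hX, hY, add_zero]
  smul_mem' := by
    intro c X hX
    simp only [Set.mem_setOf_eq] at *
    have h : (c • X)ᵀ * C + C * (c • X) = c • (Xᵀ * C + C * X) := by
      rw [transpose_smul, smul_mul_assoc, mul_smul_comm, smul_add]
    rw [h, hX, smul_zero]

def lmulC (C : Mat) : Mat →ₗ[ℂ] Mat where
  toFun X := C * X
  map_add' X Y := by simp [mul_add]
  map_smul' c X := by simp [mul_smul_comm]

lemma finrank_soC_le (C : Mat) (hCunit : IsUnit C) (hCsymm : Cᵀ = C) :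
    Module.finrank ℂ (soC C) ≤ 28 := by
  have hmem : ∀ X ∈ soC C, lmulC C X ∈ skew := by
    intro X hX
    show (C * X)ᵀ = -(C * X)
    have h0 : Xᵀ * C + C * X = 0 := hX
    rw [transpose_mul, hCsymm]
    rw [eq_comm, neg_eq_iff_add_eq_zero, add_comm]
    exact h0
  have hinj : Function.Injective ((lmulC C).restrict hmem) := by
    intro X Y h
    apply Subtype.ext
    have h2 : C * X.1 = C * Y.1 := congrArg Subtype.val h
    exact hCunit.mul_left_cancel h2
  calc Module.finrank ℂ (soC C) ≤ Module.finrank ℂ skew :=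
        LinearMap.finrank_le_finrank_of_injective hinj
    _ = 28 := finrank_skew

end So8Aux

open So8Aux in
/-- **Decomposition of `so(8)` under `spin(7)`**: the Lie algebra
`so(ℂ⁸,C) = {X : XᵀC + CX = 0}` equals the internal direct sum
`span{Γ_μ} ⊕ span{Γ_μΓ_ν : μ < ν}`; these spans have dimensions 7 and 21 and
intersect trivially. -/
theorem so8_decomposition
    (Γ : Fin 7 → Matrix (Fin 8) (Fin 8) ℂ)
    (hΓ : ∀ μ ν, Γ μ * Γ ν + Γ ν * Γ μ =
      if μ = ν then (-2 : ℂ) • (1 : Matrix (Fin 8) (Fin 8) ℂ) else 0)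
    (C : Matrix (Fin 8) (Fin 8) ℂ) (hCunit : IsUnit C) (hCsymm : Cᵀ = C)
    (hCΓ : ∀ μ, (Γ μ)ᵀ * C = -(C * Γ μ)) :
    (∀ X : Matrix (Fin 8) (Fin 8) ℂ,
      Xᵀ * C + C * X = 0 ↔
        X ∈ Submodule.span ℂ (Set.range Γ) ⊔
          Submodule.span ℂ {m : Matrix (Fin 8) (Fin 8) ℂ | ∃ μ ν : Fin 7, μ < ν ∧ m = Γ μ * Γ ν}) ∧
    Submodule.span ℂ (Set.range Γ) ⊓
        Submodule.span ℂ {m : Matrix (Fin 8) (Fin 8) ℂ | ∃ μ ν : Fin 7, μ < ν ∧ m = Γ μ * Γ ν} = ⊥ ∧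
    Module.finrank ℂ (Submodule.span ℂ (Set.range Γ)) = 7 ∧
    Module.finrank ℂ
      (Submodule.span ℂ {m : Matrix (Fin 8) (Fin 8) ℂ | ∃ μ ν : Fin 7, μ < ν ∧ m = Γ μ * Γ ν}) = 21 := by
  classical
  have hSet : {m : Matrix (Fin 8) (Fin 8) ℂ | ∃ μ ν : Fin 7, μ < ν ∧ m = Γ μ * Γ ν} =
      Set.range (fun p : Pairs => Γ p.1.1 * Γ p.1.2) := by
    ext m
    constructor
    · rintro ⟨μ, ν, h, rfl⟩
      exact ⟨⟨(μ, ν), h⟩, rfl⟩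
    · rintro ⟨⟨⟨μ, ν⟩, h⟩, rfl⟩
      exact ⟨μ, ν, h, rfl⟩
  obtain ⟨liA, liB, hdisj⟩ := linearIndependent_sum.mp (linIndep hΓ)
  have hgl : fam Γ ∘ Sum.inl = Γ := rfl
  have hgr : fam Γ ∘ Sum.inr = fun p : Pairs => Γ p.1.1 * Γ p.1.2 := rfl
  rw [hgl] at liA
  rw [hgr] at liB
  have h7 : Module.finrank ℂ (Submodule.span ℂ (Set.range Γ)) = 7 := by
    have := finrank_span_eq_card liA
    simpa using this
  have h21 : Module.finrank ℂ
      (Submodule.span ℂ {m : Matrix (Fin 8) (Fin 8) ℂ | ∃ μ ν : Fin 7, μ < ν ∧ m = Γ μ * Γ ν}) = 21 := by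
    rw [hSet]
    have := finrank_span_eq_card liB
    rw [this]
    decide
  have hinf : Submodule.span ℂ (Set.range Γ) ⊓
      Submodule.span ℂ {m : Matrix (Fin 8) (Fin 8) ℂ | ∃ μ ν : Fin 7, μ < ν ∧ m = Γ μ * Γ ν} = ⊥ := by
    rw [hSet]
    have hdisj' := hdisj
    rw [hgl, hgr] at hdisj'
    exact disjoint_iff.mp hdisj'
  refine ⟨?_, hinf, h7, h21⟩
  have hrank : Module.finrank ℂ
      ↥(Submodule.span ℂ (Set.range Γ) ⊔
        Submodule.span ℂ {m : Matrix (Fin 8) (Fin 8) ℂ | ∃ μ ν : Fin 7, μ < ν ∧ m = Γ μ * Γ ν}) = 28 := by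
    have hh := Submodule.finrank_sup_add_finrank_inf_eq
      (Submodule.span ℂ (Set.range Γ))
      (Submodule.span ℂ {m : Matrix (Fin 8) (Fin 8) ℂ | ∃ μ ν : Fin 7, μ < ν ∧ m = Γ μ * Γ ν})
    rw [hinf, finrank_bot, h7, h21] at hh
    omega
  have hVle : Submodule.span ℂ (Set.range Γ) ⊔
      Submodule.span ℂ {m : Matrix (Fin 8) (Fin 8) ℂ | ∃ μ ν : Fin 7, μ < ν ∧ m = Γ μ * Γ ν}
      ≤ soC C := by
    apply sup_le
    · rw [Submodule.span_le]
      rintro m ⟨μ, rfl⟩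
      show (Γ μ)ᵀ * C + C * Γ μ = 0
      rw [hCΓ μ, neg_add_cancel]
    · rw [Submodule.span_le]
      rintro m ⟨μ, ν, hlt, rfl⟩
      show (Γ μ * Γ ν)ᵀ * C + C * (Γ μ * Γ ν) = 0
      have key : (Γ μ * Γ ν)ᵀ * C = -(C * (Γ μ * Γ ν)) := by
        rw [transpose_mul, mul_assoc, hCΓ μ, mul_neg, ← mul_assoc, hCΓ ν]
        rw [neg_mul, neg_neg, mul_assoc, anticomm hΓ hlt.ne', mul_neg]
      rw [key, neg_add_cancel]
  have heq : Submodule.span ℂ (Set.range Γ) ⊔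
      Submodule.span ℂ {m : Matrix (Fin 8) (Fin 8) ℂ | ∃ μ ν : Fin 7, μ < ν ∧ m = Γ μ * Γ ν}
      = soC C := by
    apply Submodule.eq_of_le_of_finrank_le hVle
    rw [hrank]
    exact finrank_soC_le C hCunit hCsymm
  intro X
  constructor
  · intro hX
    have hmem : X ∈ soC C := hX
    rwa [← heq] at hmem
  · intro hX
    have hmem : X ∈ soC C := heq ▸ hX
    exact hmem

end
end

section
/- Cubic form identity for the F(4) supervariety: set 𝔠 := λ₁λ₂² + 2λ₂θ₁θ₂ and define 𝔠₁ := (1/3)λ₂², 𝔠₂ := (2/3)(λ₁λ₂ + θ₁θ₂), 𝔠₃ := (2/3)λ₂θ₂, 𝔠₄ := −(2/3)λ₂θ₁, and the 4×4 array (q^{ab})_{1≤a,b≤4} whose only nonzero entries are q^{12} = q^{21} = (1/3)μ₂, q^{22} = (1/3)μ₁, q^{23} = q^{32} = (1/6)φ₂, q^{24} = q^{42} = −(1/6)φ₁, q^{34} = −(1/6)μ₂, q^{43} = (1/6)μ₂. Then Σ_{a,b=1}^{4} 𝔠_b·𝔠_a·q^{ab} = (4/27)·𝔠·(λ₁μ₁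 + λ₂μ₂ + θ₁φ₁ + θ₂φ₂). (This is the identity 𝔠_b(T²)𝔠_a(T²)(𝔠*)^{ab}(T*) = (4/27)𝔠(T³)·t^c t*_c for the supersymmetric cubic form 𝔠(T³) = λ₁λ₂² + 2λ₂θ₁θ₂ and its dual 𝔠*((T*)³) = μ₁μ₂² + μ₂φ₁φ₂.) -/
noncomputable section

/-- **Cubic form identity for the `F(4)` supervariety**: with
`𝔠 = λ₁λ₂² + 2λ₂θ₁θ₂`, `𝔠₁ = (1/3)λ₂²`, `𝔠₂ = (2/3)(λ₁λ₂ + θ₁θ₂)`, `𝔠₃ = (2/3)λ₂θ₂`,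
`𝔠₄ = −(2/3)λ₂θ₁`, and the dual quadratic array `q^{ab}`, one has
`Σ_{a,b} 𝔠_b·𝔠_a·q^{ab} = (4/27)·𝔠·(λ₁μ₁ + λ₂μ₂ + θ₁φ₁ + θ₂φ₂)`. -/
theorem cubic_form_identity
    (A : Type*) [Ring A] [Algebra ℚ A]
    (l1 l2 m1 m2 t1 t2 f1 f2 : A)
    (hcentral : ∀ x ∈ ({l1, l2, m1, m2} : Set A), ∀ y : A, x * y = y * x)
    (hanti : ∀ x ∈ ({t1, t2, f1, f2} : Set A), ∀ y ∈ ({t1, t2, f1, f2} : Set A),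
      x * y = -(y * x)) :
    (let c : Fin 4 → A :=
      ![(1/3 : ℚ) • (l2 ^ 2), (2/3 : ℚ) • (l1 * l2 + t1 * t2),
        (2/3 : ℚ) • (l2 * t2), (-(2/3) : ℚ) • (l2 * t1)]
     let q : Fin 4 → Fin 4 → A :=
      ![![0, (1/3 : ℚ) • m2, 0, 0],
        ![(1/3 : ℚ) • m2, (1/3 : ℚ) • m1, (1/6 : ℚ) • f2, (-(1/6) : ℚ) • f1],
        ![0, (1/6 : ℚ) • f2, 0, (-(1/6) : ℚ) • m2],
        ![0, (-(1/6) : ℚ) • f1, (1/6 : ℚ) • m2, 0]]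
     ∑ a : Fin 4, ∑ b : Fin 4, c b * c a * q a b
      = (4/27 : ℚ) • ((l1 * l2 ^ 2 + 2 * (l2 * t1 * t2)) *
          (l1 * m1 + l2 * m2 + t1 * f1 + t2 * f2))) := by
  have hc_l1 : ∀ y : A, l1 * y = y * l1 := hcentral l1 (by simp)
  have hc_l2 : ∀ y : A, l2 * y = y * l2 := hcentral l2 (by simp)
  have hc_m1 : ∀ y : A, m1 * y = y * m1 := hcentral m1 (by simp)
  have hc_m2 : ∀ y : A, m2 * y = y * m2 := hcentral m2 (by simp)
  have ha : ∀ x ∈ ({t1, t2, f1, f2} : Set A), ∀ y ∈ ({t1, t2, f1, f2} : Set A), x * y = -(y * x) := hanti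
  have s_l2_l1 : l2 * l1 = l1 * l2 := (hc_l1 l2).symm
  have a_l2_l1 : ∀ z : A, l2 * (l1 * z) = l1 * (l2 * z) := fun z => by rw [← mul_assoc, s_l2_l1, mul_assoc]
  have s_m1_l1 : m1 * l1 = l1 * m1 := (hc_l1 m1).symm
  have a_m1_l1 : ∀ z : A, m1 * (l1 * z) = l1 * (m1 * z) := fun z => by rw [← mul_assoc, s_m1_l1, mul_assoc]
  have s_m1_l2 : m1 * l2 = l2 * m1 := (hc_l2 m1).symm
  have a_m1_l2 : ∀ z : A, m1 * (l2 * z) = l2 * (m1 * z) := fun z => by rw [← mul_assoc, s_m1_l2, mul_assoc]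
  have s_m2_l1 : m2 * l1 = l1 * m2 := (hc_l1 m2).symm
  have a_m2_l1 : ∀ z : A, m2 * (l1 * z) = l1 * (m2 * z) := fun z => by rw [← mul_assoc, s_m2_l1, mul_assoc]
  have s_m2_l2 : m2 * l2 = l2 * m2 := (hc_l2 m2).symm
  have a_m2_l2 : ∀ z : A, m2 * (l2 * z) = l2 * (m2 * z) := fun z => by rw [← mul_assoc, s_m2_l2, mul_assoc]
  have s_m2_m1 : m2 * m1 = m1 * m2 := (hc_m1 m2).symm
  have a_m2_m1 : ∀ z : A, m2 * (m1 * z) = m1 * (m2 * z) := fun z => by rw [← mul_assoc, s_m2_m1, mul_assoc]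
  have s_t1_l1 : t1 * l1 = l1 * t1 := (hc_l1 t1).symm
  have a_t1_l1 : ∀ z : A, t1 * (l1 * z) = l1 * (t1 * z) := fun z => by rw [← mul_assoc, s_t1_l1, mul_assoc]
  have s_t1_l2 : t1 * l2 = l2 * t1 := (hc_l2 t1).symm
  have a_t1_l2 : ∀ z : A, t1 * (l2 * z) = l2 * (t1 * z) := fun z => by rw [← mul_assoc, s_t1_l2, mul_assoc]
  have s_t1_m1 : t1 * m1 = m1 * t1 := (hc_m1 t1).symm
  have a_t1_m1 : ∀ z : A, t1 * (m1 * z) = m1 * (t1 * z) := fun z => by rw [← mul_assoc, s_t1_m1, mul_assoc]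
  have s_t1_m2 : t1 * m2 = m2 * t1 := (hc_m2 t1).symm
  have a_t1_m2 : ∀ z : A, t1 * (m2 * z) = m2 * (t1 * z) := fun z => by rw [← mul_assoc, s_t1_m2, mul_assoc]
  have s_t2_l1 : t2 * l1 = l1 * t2 := (hc_l1 t2).symm
  have a_t2_l1 : ∀ z : A, t2 * (l1 * z) = l1 * (t2 * z) := fun z => by rw [← mul_assoc, s_t2_l1, mul_assoc]
  have s_t2_l2 : t2 * l2 = l2 * t2 := (hc_l2 t2).symm
  have a_t2_l2 : ∀ z : A, t2 * (l2 * z) = l2 * (t2 * z) := fun z => by rw [← mul_assoc, s_t2_l2, mul_assoc]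
  have s_t2_m1 : t2 * m1 = m1 * t2 := (hc_m1 t2).symm
  have a_t2_m1 : ∀ z : A, t2 * (m1 * z) = m1 * (t2 * z) := fun z => by rw [← mul_assoc, s_t2_m1, mul_assoc]
  have s_t2_m2 : t2 * m2 = m2 * t2 := (hc_m2 t2).symm
  have a_t2_m2 : ∀ z : A, t2 * (m2 * z) = m2 * (t2 * z) := fun z => by rw [← mul_assoc, s_t2_m2, mul_assoc]
  have s_t2_t1 : t2 * t1 = -(t1 * t2) := ha t2 (by simp) t1 (by simp)
  have a_t2_t1 : ∀ z : A, t2 * (t1 * z) = -(t1 * (t2 * z)) := fun z => by rw [← mul_assoc, s_t2_t1, neg_mul, mul_assoc]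
  have s_f1_l1 : f1 * l1 = l1 * f1 := (hc_l1 f1).symm
  have a_f1_l1 : ∀ z : A, f1 * (l1 * z) = l1 * (f1 * z) := fun z => by rw [← mul_assoc, s_f1_l1, mul_assoc]
  have s_f1_l2 : f1 * l2 = l2 * f1 := (hc_l2 f1).symm
  have a_f1_l2 : ∀ z : A, f1 * (l2 * z) = l2 * (f1 * z) := fun z => by rw [← mul_assoc, s_f1_l2, mul_assoc]
  have s_f1_m1 : f1 * m1 = m1 * f1 := (hc_m1 f1).symm
  have a_f1_m1 : ∀ z : A, f1 * (m1 * z) = m1 * (f1 * z) := fun z => by rw [← mul_assoc, s_f1_m1, mul_assoc]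
  have s_f1_m2 : f1 * m2 = m2 * f1 := (hc_m2 f1).symm
  have a_f1_m2 : ∀ z : A, f1 * (m2 * z) = m2 * (f1 * z) := fun z => by rw [← mul_assoc, s_f1_m2, mul_assoc]
  have s_f1_t1 : f1 * t1 = -(t1 * f1) := ha f1 (by simp) t1 (by simp)
  have a_f1_t1 : ∀ z : A, f1 * (t1 * z) = -(t1 * (f1 * z)) := fun z => by rw [← mul_assoc, s_f1_t1, neg_mul, mul_assoc]
  have s_f1_t2 : f1 * t2 = -(t2 * f1) := ha f1 (by simp) t2 (by simp)
  have a_f1_t2 : ∀ z : A, f1 * (t2 * z) = -(t2 * (f1 * z)) := fun z => by rw [← mul_assoc, s_f1_t2, neg_mul, mul_assoc]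
  have s_f2_l1 : f2 * l1 = l1 * f2 := (hc_l1 f2).symm
  have a_f2_l1 : ∀ z : A, f2 * (l1 * z) = l1 * (f2 * z) := fun z => by rw [← mul_assoc, s_f2_l1, mul_assoc]
  have s_f2_l2 : f2 * l2 = l2 * f2 := (hc_l2 f2).symm
  have a_f2_l2 : ∀ z : A, f2 * (l2 * z) = l2 * (f2 * z) := fun z => by rw [← mul_assoc, s_f2_l2, mul_assoc]
  have s_f2_m1 : f2 * m1 = m1 * f2 := (hc_m1 f2).symm
  have a_f2_m1 : ∀ z : A, f2 * (m1 * z) = m1 * (f2 * z) := fun z => by rw [← mul_assoc, s_f2_m1, mul_assoc]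
  have s_f2_m2 : f2 * m2 = m2 * f2 := (hc_m2 f2).symm
  have a_f2_m2 : ∀ z : A, f2 * (m2 * z) = m2 * (f2 * z) := fun z => by rw [← mul_assoc, s_f2_m2, mul_assoc]
  have s_f2_t1 : f2 * t1 = -(t1 * f2) := ha f2 (by simp) t1 (by simp)
  have a_f2_t1 : ∀ z : A, f2 * (t1 * z) = -(t1 * (f2 * z)) := fun z => by rw [← mul_assoc, s_f2_t1, neg_mul, mul_assoc]
  have s_f2_t2 : f2 * t2 = -(t2 * f2) := ha f2 (by simp) t2 (by simp)
  have a_f2_t2 : ∀ z : A, f2 * (t2 * z) = -(t2 * (f2 * z)) := fun z => by rw [← mul_assoc, s_f2_t2, neg_mul, mul_assoc]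
  have s_f2_f1 : f2 * f1 = -(f1 * f2) := ha f2 (by simp) f1 (by simp)
  have a_f2_f1 : ∀ z : A, f2 * (f1 * z) = -(f1 * (f2 * z)) := fun z => by rw [← mul_assoc, s_f2_f1, neg_mul, mul_assoc]
  have sq_t1 : t1 * t1 = 0 := by
    have h := ha t1 (by simp) t1 (by simp)
    have h2 : t1 * t1 + t1 * t1 = 0 := by nth_rewrite 1 [h]; exact neg_add_cancel _
    calc t1 * t1 = (1/2:ℚ) • (t1 * t1 + t1 * t1) := by
          rw [smul_add]; rw [← add_smul]; norm_num
      _ = 0 := by rw [h2, smul_zero]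
  have sqz_t1 : ∀ z : A, t1 * (t1 * z) = 0 := fun z => by rw [← mul_assoc, sq_t1, zero_mul]
  have sq_t2 : t2 * t2 = 0 := by
    have h := ha t2 (by simp) t2 (by simp)
    have h2 : t2 * t2 + t2 * t2 = 0 := by nth_rewrite 1 [h]; exact neg_add_cancel _
    calc t2 * t2 = (1/2:ℚ) • (t2 * t2 + t2 * t2) := by
          rw [smul_add]; rw [← add_smul]; norm_num
      _ = 0 := by rw [h2, smul_zero]
  have sqz_t2 : ∀ z : A, t2 * (t2 * z) = 0 := fun z => by rw [← mul_assoc, sq_t2, zero_mul]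
  have sq_f1 : f1 * f1 = 0 := by
    have h := ha f1 (by simp) f1 (by simp)
    have h2 : f1 * f1 + f1 * f1 = 0 := by nth_rewrite 1 [h]; exact neg_add_cancel _
    calc f1 * f1 = (1/2:ℚ) • (f1 * f1 + f1 * f1) := by
          rw [smul_add]; rw [← add_smul]; norm_num
      _ = 0 := by rw [h2, smul_zero]
  have sqz_f1 : ∀ z : A, f1 * (f1 * z) = 0 := fun z => by rw [← mul_assoc, sq_f1, zero_mul]
  have sq_f2 : f2 * f2 = 0 := by
    have h := ha f2 (by simp) f2 (by simp)
    have h2 : f2 * f2 + f2 * f2 = 0 := by nth_rewrite 1 [h]; exact neg_add_cancel _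
    calc f2 * f2 = (1/2:ℚ) • (f2 * f2 + f2 * f2) := by
          rw [smul_add]; rw [← add_smul]; norm_num
      _ = 0 := by rw [h2, smul_zero]
  have sqz_f2 : ∀ z : A, f2 * (f2 * z) = 0 := fun z => by rw [← mul_assoc, sq_f2, zero_mul]
  simp only [Fin.sum_univ_four, Matrix.cons_val_zero, Matrix.cons_val_one, Matrix.head_cons,
    Matrix.cons_val_two, Matrix.tail_cons, Matrix.cons_val_three, Matrix.head_fin_const]
  simp only [pow_two, two_mul, mul_add, add_mul, smul_mul_assoc, mul_smul_comm, smul_smul,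
    mul_assoc, mul_zero, zero_mul, smul_zero, neg_mul, mul_neg, neg_neg, smul_neg, neg_add,
    zero_add, add_zero,
    s_l2_l1, a_l2_l1, s_m1_l1, a_m1_l1, s_m1_l2, a_m1_l2, s_m2_l1, a_m2_l1, s_m2_l2, a_m2_l2, s_m2_m1, a_m2_m1, s_t1_l1, a_t1_l1, s_t1_l2, a_t1_l2, s_t1_m1, a_t1_m1, s_t1_m2, a_t1_m2, s_t2_l1, a_t2_l1, s_t2_l2, a_t2_l2, s_t2_m1, a_t2_m1, s_t2_m2, a_t2_m2, s_t2_t1, a_t2_t1, s_f1_l1, a_f1_l1, s_f1_l2, a_f1_l2, s_f1_m1, a_f1_m1, s_f1_m2, a_f1_m2, s_f1_t1, a_f1_t1, s_f1_t2, a_f1_t2, s_f2_l1, a_f2_l1, s_f2_l2, a_f2_l2, s_f2_m1, a_f2_m1, s_f2_m2, a_f2_m2, s_f2_t1, a_f2_t1, s_f2_t2, a_f2_t2, s_f2_f1, a_f2_f1, sq_t1, sqz_t1, sq_t2, sqz_t2, sq_f1, sqz_f1, sq_f2, sqz_f2]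
  module

end
end
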